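/- arXiv:math/0612246 — 6 statements merged into one kernel-verified Lean document; each statement's English description precedes it below -/
import Mathlib

section
/- Let κ be a regular uncountable cardinal and λ ≥ κ a cardinal. Then λ^{<κ} = 2^{<κ} · u(κ,λ), where u(κ,λ) is the least cardinality of a cofinal subset of P_κ(λ) ordered by inclusion. -/
open Cardinal Set

noncomputable section

abbrev SOrd : Type 1 := Set Ordinal

/-- `P_κ(λ)`: sets of ordinals below `λ.ord` of cardinality `< κ`. -/
def Pkl (κ lam : Cardinal.{0}) : Set SOrd :=
  {a | (∀ x ∈ a, x < lam.ord) ∧ #a < Cardinal.lift.{1} κ}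

/-- The noncofinal ideal `I_{κ,λ}`. -/
def noncofinalIdeal (κ lam : Cardinal.{0}) : Set (Set SOrd) :=
  {A | A ⊆ Pkl κ lam ∧ ∃ b ∈ Pkl κ lam, ∀ a ∈ A, ¬ b ⊆ a}

/-- An ideal on `P_κ(λ)`. -/
structure IsIdeal (κ lam : Cardinal.{0}) (J : Set (Set SOrd)) : Prop where
  noncof : noncofinalIdeal κ lam ⊆ J
  subset_Pkl : ∀ A ∈ J, A ⊆ Pkl κ lam
  proper : Pkl κ lam ∉ J
  mono : ∀ A ∈ J, ∀ B ⊆ A, B ∈ J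
  unionlt : ∀ X : Set (Set SOrd), X ⊆ J → #X < Cardinal.lift.{1} κ → ⋃₀ X ∈ J

/-- `A` is `J`-positive. -/
def JPos (κ lam : Cardinal.{0}) (J : Set (Set SOrd)) (A : Set SOrd) : Prop :=
  A ⊆ Pkl κ lam ∧ A ∉ J

/-- `J | A`. -/
def restr (κ lam : Cardinal.{0}) (J : Set (Set SOrd)) (A : Set SOrd) : Set (Set SOrd) :=
  {X | X ⊆ Pkl κ lam ∧ X ∩ A ∈ J}

/-- The dual filter `J*`. -/
def dualFilter (κ lam : Cardinal.{0}) (J : Set (Set SOrd)) : Set (Set SOrd) :=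
  {A | A ⊆ Pkl κ lam ∧ Pkl κ lam \ A ∈ J}

/-- `μ`-normality. -/
def MuNormal (κ lam μ : Cardinal.{0}) (J : Set (Set SOrd)) : Prop :=
  ∀ A, JPos κ lam J A → ∀ f : SOrd → Ordinal,
    (∀ a ∈ A, f a ∈ a ∧ f a < μ.ord) →
    ∃ B, JPos κ lam J B ∧ B ⊆ A ∧ ∃ c, ∀ a ∈ B, f a = c

/-- `NS^μ_{κ,λ}`, the smallest `μ`-normal ideal. -/
def NSmu (κ lam μ : Cardinal.{0}) : Set (Set SOrd) :=
  ⋂₀ {J | IsIdeal κ lam J ∧ MuNormal κ lam μ J}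

/-- Club subsets of `P_κ(λ)`. -/
def IsClubPkl (κ lam : Cardinal.{0}) (C : Set SOrd) : Prop :=
  C ⊆ Pkl κ lam ∧ (∀ a ∈ Pkl κ lam, ∃ c ∈ C, a ⊆ c) ∧
  ∀ o : Ordinal, o ≠ 0 → o < κ.ord → ∀ s : Set.Iio o → SOrd,
    (∀ i, s i ∈ C) → (∀ i j : Set.Iio o, i ≤ j → s i ⊆ s j) → (⋃ i, s i) ∈ C

/-- The nonstationary ideal `NS_{κ,λ}`. -/
def NSkl (κ lam : Cardinal.{0}) : Set (Set SOrd) :=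
  {A | A ⊆ Pkl κ lam ∧ ∃ C, IsClubPkl κ lam C ∧ A ∩ C = ∅}

/-- Stationary subsets of `P_κ(λ)`. -/
def StatPkl (κ lam : Cardinal.{0}) (S : Set SOrd) : Prop :=
  S ⊆ Pkl κ lam ∧ ∀ C, IsClubPkl κ lam C → (S ∩ C).Nonempty

/-- Maximal antichains of `J`-positive sets mod `J`. -/
def IsMaxAntichainJ (κ lam : Cardinal.{0}) (J : Set (Set SOrd)) (Q : Set (Set SOrd)) : Prop :=
  (∀ A ∈ Q, JPos κ lam J A) ∧
  (∀ A ∈ Q, ∀ B ∈ Q, A ≠ B → A ∩ B ∈ J) ∧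
  (∀ C, JPos κ lam J C → ∃ A ∈ Q, JPos κ lam J (A ∩ C))

/-- Precipitousness. -/
def Precipitous (κ lam : Cardinal.{0}) (J : Set (Set SOrd)) : Prop :=
  ∀ A, JPos κ lam J A → ∀ Q : ℕ → Set (Set SOrd),
    (∀ n, IsMaxAntichainJ κ lam (restr κ lam J A) (Q n)) →
    (∀ n, ∀ B ∈ Q (n+1), ∃ B' ∈ Q n, B ⊆ B') →
    ∃ f : ℕ → Set SOrd, (∀ n, f n ∈ Q n) ∧ (∀ n, f (n+1) ⊆ f n) ∧ (⋂ n, f n).Nonempty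

def NowherePrecipitous (κ lam : Cardinal.{0}) (J : Set (Set SOrd)) : Prop :=
  ∀ A, JPos κ lam J A → ¬ Precipitous κ lam (restr κ lam J A)

/-- A winning strategy for player II in the game `G(J)`. -/
def WinningII (κ lam : Cardinal.{0}) (J : Set (Set SOrd))
    (σ : List (Set SOrd) → Set SOrd) : Prop :=
  ∀ X : ℕ → Set SOrd,
    (∀ n, X (2*n+1) = σ (List.ofFn fun i : Fin (2*n+1) => X i)) →
    (∀ n, JPos κ lam J (X (2*n))) →
    (∀ n, X (2*n+2) ⊆ X (2*n+1)) →
    (∀ n, JPos κ lam J (X (2*n+1)) ∧ X (2*n+1) ⊆ X (2*n)) ∧ (⋂ n, X n) = ∅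

/-- `u(κ,λ)`: least cardinality of a cofinal subset of `P_κ(λ)`. -/
def uCard (κ lam : Cardinal.{0}) : Cardinal.{1} :=
  sInf {c | ∃ X ⊆ Pkl κ lam, #X = c ∧ ∀ a ∈ Pkl κ lam, ∃ x ∈ X, a ⊆ x}

/-- `cof̄(J)`. -/
def cofbar (κ : Cardinal.{0}) (J : Set (Set SOrd)) : Cardinal.{1} :=
  sInf {c | ∃ Y ⊆ J, #Y = c ∧
    ∀ A ∈ J, ∃ y ⊆ Y, #y < Cardinal.lift.{1} κ ∧ A ⊆ ⋃₀ y}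

/-- `[μ]^{<θ}`-normality. -/
def SeqNormal (κ lam μ θ : Cardinal.{0}) (J : Set (Set SOrd)) : Prop :=
  ∀ A, JPos κ lam J A → ∀ f : SOrd → SOrd,
    (∀ a ∈ A, f a ⊆ a ∩ Set.Iio μ.ord ∧ #(f a) < Cardinal.lift.{1} θ ∧
      #(f a) < #(↥(a ∩ Set.Iio θ.ord))) →
    ∃ B, JPos κ lam J B ∧ B ⊆ A ∧ ∃ c, ∀ a ∈ B, f a = c

/-- `NS^{[μ]^{<θ}}_{κ,λ}`, the smallest `[μ]^{<θ}`-normal ideal. -/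
def NSseq (κ lam μ θ : Cardinal.{0}) : Set (Set SOrd) :=
  ⋂₀ {J | IsIdeal κ lam J ∧ SeqNormal κ lam μ θ J}

/-- `θ̄`. -/
def IsThetaBar (κ θ θbar : Cardinal.{0}) : Prop :=
  (θ < κ ∧ θbar = θ) ∨ (θ = κ ∧ (∀ ν, Order.succ ν ≠ κ) ∧ θbar = θ) ∨
  (∃ ν : Cardinal.{0}, θ = κ ∧ κ = Order.succ ν ∧ θbar = ν)

/-- `a ∩ κ ∈ κ`. -/
def InitSeg (κ : Cardinal.{0}) (a : SOrd) : Prop :=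
  ∃ β < κ.ord, a ∩ Set.Iio κ.ord = Set.Iio β

/-- `C_g^{κ,λ}` for `g : P_{θ̄·3}(μ) → P₃(λ)`. -/
def CgSet (κ lam μ θbar : Cardinal.{0}) (g : SOrd → SOrd) : Set SOrd :=
  {a ∈ Pkl κ lam | (a ∩ Set.Iio (θbar.ord * 3)).Nonempty ∧
    ∀ e : SOrd, e ⊆ a ∩ Set.Iio μ.ord → #e < #(↥(a ∩ Set.Iio (θbar.ord * 3))) → g e ⊆ a}

/-- `C_k^{κ,λ'}` for `k : P₃(μ) → P₂(λ')`. -/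
def Cg3 (κ lam' μ : Cardinal.{0}) (k : SOrd → SOrd) : Set SOrd :=
  {a ∈ Pkl κ lam' | (a ∩ Set.Iio μ.ord).Nonempty ∧
    ∀ e : SOrd, e ⊆ a ∩ Set.Iio μ.ord → #e < 3 → k e ⊆ a}

/-- Club subsets of an ordinal. -/
def OrdClub (μo : Ordinal.{0}) (C : Set Ordinal) : Prop :=
  C ⊆ Set.Iio μo ∧ (∀ β < μo, ∃ γ ∈ C, β ≤ γ) ∧
  ∀ δ < μo, δ ≠ 0 → (∀ β < δ, ∃ γ ∈ C, β ≤ γ ∧ γ < δ) → δ ∈ C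

/-- Stationary subsets of an ordinal. -/
def OrdStationary (μo : Ordinal.{0}) (S : Set Ordinal) : Prop :=
  S ⊆ Set.Iio μo ∧ ∀ C, OrdClub μo C → (S ∩ C).Nonempty

/-- The set `E` of limit ordinals below `μ` of cofinality `< κ`. -/
def Eset (κ : Cardinal.{0}) (μo : Ordinal.{0}) : Set Ordinal :=
  {α | α < μo ∧ Order.IsSuccLimit α ∧ α.cof < κ}

/-- `W_α = {a ∈ P_κ(λ) : ⋃ a = λ_α}`. -/
def Wset (κ lam : Cardinal.{0}) (L : Ordinal.{0} → Cardinal.{0}) (α : Ordinal.{0}) : Set SOrd :=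
  {a ∈ Pkl κ lam | sSup a = (L α).ord}

/-- The club set `B`. -/
def Bset (κ lam : Cardinal.{0}) (μo : Ordinal.{0}) (L : Ordinal.{0} → Cardinal.{0}) : Set SOrd :=
  {a ∈ Pkl κ lam | (0 : Ordinal.{0}) ∈ a ∧ (∀ γ ∈ a, γ + 1 ∈ a) ∧ InitSeg κ a ∧
    (∀ β < μo, (β ∈ a ↔ (L β).ord ∈ a)) ∧
    ∀ γ ∈ a, ∃ β ∈ a, β < μo ∧ γ < (L β).ord}

/-- A continuous increasing sequence of cardinals `⟨λ_β : β < μ⟩` cofinal in `λ` with `λ₀ > μ`. -/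
def GoodSeq (lam : Cardinal.{0}) (μo : Ordinal.{0}) (L : Ordinal.{0} → Cardinal.{0}) : Prop :=
  (∀ β γ : Ordinal, β < γ → γ < μo → L β < L γ) ∧
  (∀ δ, δ < μo → Order.IsSuccLimit δ → L δ = ⨆ β : Set.Iio δ, L β) ∧
  (lam = ⨆ β : Set.Iio μo, L β) ∧ μo.card < L 0



lemma lift_powerlt' (a b : Cardinal.{0}) :
    Cardinal.lift.{1} (a ^< b) = Cardinal.lift.{1} a ^< Cardinal.lift.{1} b := by
  apply le_antisymm
  · rw [Cardinal.powerlt, Cardinal.lift_iSup]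
    · apply ciSup_le'
      rintro ⟨c, hc⟩
      rw [Cardinal.lift_power]
      exact Cardinal.le_powerlt _ (Cardinal.lift_lt.2 hc)
    · rw [← Set.image_eq_range]
      exact bddAbove_image _ bddAbove_Iio
  · rw [Cardinal.powerlt_le]
    intro x hx
    obtain ⟨x', hx', rfl⟩ := Cardinal.lt_lift_iff.1 hx
    rw [← Cardinal.lift_power]
    exact Cardinal.lift_le.2 (Cardinal.le_powerlt a hx')

lemma uCard_spec (κ lam : Cardinal.{0}) :
    ∃ X ⊆ Pkl κ lam, #X = uCard κ lam ∧ ∀ a ∈ Pkl κ lam, ∃ x ∈ X, a ⊆ x := by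
  have hne : {c | ∃ X ⊆ Pkl κ lam, #X = c ∧ ∀ a ∈ Pkl κ lam, ∃ x ∈ X, a ⊆ x}.Nonempty :=
    ⟨#(Pkl κ lam), Pkl κ lam, Set.Subset.rfl, rfl, fun a ha => ⟨a, ha, Set.Subset.rfl⟩⟩
  exact csInf_mem hne

lemma uCard_le_lift (κ lam : Cardinal.{0}) (hreg : κ.IsRegular) (hunc : ℵ₀ < κ)
    (hlam : κ ≤ lam) : uCard κ lam ≤ Cardinal.lift.{1} (lam ^< κ) := by
  have hlamle : lam ≤ lam ^< κ :=
    (Cardinal.power_one lam).ge.trans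
      (Cardinal.le_powerlt lam (lt_of_lt_of_le Cardinal.one_lt_aleph0 hunc.le))
  have hinf : ℵ₀ ≤ Cardinal.lift.{1} (lam ^< κ) := by
    rw [← Cardinal.lift_aleph0.{1,0}]
    exact Cardinal.lift_le.2 ((hunc.le.trans hlam).trans hlamle)
  have h1 : uCard κ lam ≤ #(Pkl κ lam) :=
    csInf_le' ⟨Pkl κ lam, Set.Subset.rfl, rfl, fun a ha => ⟨a, ha, Set.Subset.rfl⟩⟩
  refine h1.trans ?_
  have hcode : ∀ a : ↥(Pkl κ lam),
      ∃ p : Σ o : ↥(Set.Iio κ.ord), (↥(Set.Iio o.val) → ↥(Set.Iio lam.ord)),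
        (a : SOrd) = Subtype.val '' Set.range p.2 := by
    intro a
    obtain ⟨ha1, ha2⟩ := a.2
    obtain ⟨ν, hν, hνe⟩ := Cardinal.lt_lift_iff.1 ha2
    have ho : ν.ord < κ.ord := Cardinal.ord_lt_ord.2 hν
    have hcard : #↥(Set.Iio ν.ord) = #↥(a : SOrd) := by
      rw [Ordinal.mk_Iio_ordinal, Cardinal.card_ord, hνe]
    obtain ⟨e⟩ := Cardinal.eq.1 hcard
    refine ⟨⟨⟨ν.ord, ho⟩, fun i => ⟨(e i).val, ha1 _ (e i).2⟩⟩, ?_⟩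
    ext x
    constructor
    · intro hx
      exact ⟨_, ⟨e.symm ⟨x, hx⟩, rfl⟩, congrArg Subtype.val (e.apply_symm_apply ⟨x, hx⟩)⟩
    · rintro ⟨b, ⟨i, rfl⟩, rfl⟩
      exact (e i).2
  choose p hp using hcode
  have hinj : Function.Injective p := by
    intro a b hab
    apply Subtype.ext
    rw [hp a, hp b, hab]
  have hκle : Cardinal.lift.{1} κ ≤ Cardinal.lift.{1} (lam ^< κ) :=
    Cardinal.lift_le.2 (hlam.trans hlamle)
  calc #↥(Pkl κ lam)
      ≤ #(Σ o : ↥(Set.Iio κ.ord), (↥(Set.Iio o.val) → ↥(Set.Iio lam.ord))) :=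
        Cardinal.mk_le_of_injective hinj
    _ = Cardinal.sum (fun o : ↥(Set.Iio κ.ord) =>
          #(↥(Set.Iio o.val) → ↥(Set.Iio lam.ord))) := Cardinal.mk_sigma _
    _ ≤ Cardinal.sum (fun _ : ↥(Set.Iio κ.ord) => Cardinal.lift.{1} (lam ^< κ)) := by
        apply Cardinal.sum_le_sum
        intro o
        have : #(↥(Set.Iio o.val) → ↥(Set.Iio lam.ord)) =
            Cardinal.lift.{1} (lam ^ o.val.card) := by
          rw [← Cardinal.power_def, Ordinal.mk_Iio_ordinal, Ordinal.mk_Iio_ordinal,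
            Cardinal.card_ord, Cardinal.lift_power]
        rw [this]
        exact Cardinal.lift_le.2 (Cardinal.le_powerlt lam (Cardinal.lt_ord.1 o.2))
    _ = #↥(Set.Iio κ.ord) * Cardinal.lift.{1} (lam ^< κ) := Cardinal.sum_const' _ _
    _ = Cardinal.lift.{1} κ * Cardinal.lift.{1} (lam ^< κ) := by
        rw [Ordinal.mk_Iio_ordinal, Cardinal.card_ord]
    _ ≤ Cardinal.lift.{1} (lam ^< κ) * Cardinal.lift.{1} (lam ^< κ) :=
        mul_le_mul_left hκle _
    _ = Cardinal.lift.{1} (lam ^< κ) := Cardinal.mul_eq_self hinf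


theorem stmt0 (κ lam : Cardinal.{0}) (hreg : κ.IsRegular) (hunc : ℵ₀ < κ)
    (hlam : κ ≤ lam) :
    Cardinal.lift.{1} (lam ^< κ) = Cardinal.lift.{1} (2 ^< κ) * uCard κ lam := by
  have h2lam : (2 : Cardinal.{0}) ≤ lam :=
    le_trans (le_of_lt (lt_of_lt_of_le (by exact_mod_cast Cardinal.nat_lt_aleph0 2) hunc.le)) hlam
  have hlamle : lam ≤ lam ^< κ :=
    (Cardinal.power_one lam).ge.trans
      (Cardinal.le_powerlt lam (lt_of_lt_of_le Cardinal.one_lt_aleph0 hunc.le))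
  have hinf : ℵ₀ ≤ Cardinal.lift.{1} (lam ^< κ) := by
    rw [← Cardinal.lift_aleph0.{1,0}]
    exact Cardinal.lift_le.2 ((hunc.le.trans hlam).trans hlamle)
  apply le_antisymm
  · -- hard direction
    obtain ⟨X, hXsub, hXcard, hXcof⟩ := uCard_spec κ lam
    rw [lift_powerlt', Cardinal.powerlt_le]
    intro x hx
    obtain ⟨μ, hμ, rfl⟩ := Cardinal.lt_lift_iff.1 hx
    set D := ↥(Set.Iio μ.ord) with hDdef
    set T := ↥(Set.Iio lam.ord) with hTdef
    have hD : #D = Cardinal.lift.{1} μ := by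
      rw [hDdef, Ordinal.mk_Iio_ordinal, Cardinal.card_ord]
    have hT : #T = Cardinal.lift.{1} lam := by
      rw [hTdef, Ordinal.mk_Iio_ordinal, Cardinal.card_ord]
    have key : #(D → T) = Cardinal.lift.{1} lam ^ Cardinal.lift.{1} μ := by
      rw [← hT, ← hD]; exact (Cardinal.power_def T D).symm
    have hrange : ∀ f : D → T, (Subtype.val '' Set.range f) ∈ Pkl κ lam := by
      intro f
      constructor
      · rintro x ⟨y, -, rfl⟩; exact y.2
      · calc #(Subtype.val '' Set.range f) ≤ #(Set.range f) := Cardinal.mk_image_le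
          _ ≤ #D := Cardinal.mk_range_le
          _ = Cardinal.lift.{1} μ := hD
          _ < Cardinal.lift.{1} κ := Cardinal.lift_lt.2 hμ
    choose xf hxX hxsub using fun f : D → T => hXcof _ (hrange f)
    let Φ : (D → T) → Σ s : ↥X, (D → ↥(s : SOrd)) :=
      fun f => ⟨⟨xf f, hxX f⟩, fun i => ⟨(f i).val, hxsub f ⟨f i, ⟨i, rfl⟩, rfl⟩⟩⟩
    have hΦ : Function.Injective Φ := by
      intro f g hfg
      have h2 := congrArg
        (fun q : Σ s : ↥X, (D → ↥(s : SOrd)) => fun i : D => (q.2 i).val) hfg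
      funext i
      exact Subtype.ext (congrFun h2 i)
    calc Cardinal.lift.{1} lam ^ Cardinal.lift.{1} μ
        = #(D → T) := key.symm
      _ ≤ #(Σ s : ↥X, (D → ↥(s : SOrd))) := Cardinal.mk_le_of_injective hΦ
      _ = Cardinal.sum (fun s : ↥X => #(D → ↥(s : SOrd))) := Cardinal.mk_sigma _
      _ ≤ Cardinal.sum (fun _ : ↥X => Cardinal.lift.{1} (2 ^< κ)) := by
          apply Cardinal.sum_le_sum
          intro s
          obtain ⟨ν, hν, hνe⟩ := Cardinal.lt_lift_iff.1 (hXsub s.2).2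
          have h1 : #(D → ↥(s : SOrd)) = Cardinal.lift.{1} (ν ^ μ) := by
            rw [← Cardinal.power_def, hD, ← hνe, Cardinal.lift_power]
          rw [h1]
          apply Cardinal.lift_le.2
          calc ν ^ μ ≤ (2 ^ ν) ^ μ :=
                Cardinal.power_le_power_right (Cardinal.cantor ν).le
            _ = 2 ^ (ν * μ) := (Cardinal.power_mul).symm
            _ ≤ 2 ^< κ :=
                Cardinal.le_powerlt 2 (Cardinal.mul_lt_of_lt hreg.aleph0_le hν hμ)
      _ = #↥X * Cardinal.lift.{1} (2 ^< κ) := Cardinal.sum_const' _ _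
      _ = uCard κ lam * Cardinal.lift.{1} (2 ^< κ) := by rw [hXcard]
      _ = Cardinal.lift.{1} (2 ^< κ) * uCard κ lam := mul_comm _ _
  · -- easy direction
    have ha : Cardinal.lift.{1} (2 ^< κ) ≤ Cardinal.lift.{1} (lam ^< κ) :=
      Cardinal.lift_le.2 (Cardinal.powerlt_le.2 fun x hx =>
        (Cardinal.power_le_power_right h2lam).trans (Cardinal.le_powerlt lam hx))
    have hb : uCard κ lam ≤ Cardinal.lift.{1} (lam ^< κ) :=
      uCard_le_lift κ lam hreg hunc hlam
    calc Cardinal.lift.{1} (2 ^< κ) * uCard κ lam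
        ≤ Cardinal.lift.{1} (lam ^< κ) * Cardinal.lift.{1} (lam ^< κ) :=
          mul_le_mul' ha hb
      _ = Cardinal.lift.{1} (lam ^< κ) := Cardinal.mul_eq_self hinf


end
end

section
/- Let κ be a regular uncountable cardinal, λ ≥ κ, and A ⊆ P_κ(λ) a cofinal-positive set (i.e., for every b ∈ P_κ(λ) there is a ∈ A with b ⊆ a) such that for every b ∈ P_κ(λ), the set {a ∈ A : b ⊆ a} has the same cardinality as A. Then A can be partitioned into |A| pairwise disjoint sets, each of which is cofinal-positive (i.e., each meets {a : b ⊆ a} for every b ∈ P_κ(λ)). -/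
open Cardinal Set

noncomputable section

universe u

lemma exists_inj_selector (α : Type u) (hinf : ℵ₀ ≤ #α) (S : α → Set α)
    (hS : ∀ a, #α ≤ #(S a)) :
    ∃ H : α × α → α, Function.Injective H ∧ ∀ p, H p ∈ S p.1 := by
  classical
  have hprod : #(α × α) = #α := by
    rw [Cardinal.mk_prod]; simpa using Cardinal.mul_eq_self hinf
  set c : Cardinal := #α with hc
  obtain ⟨e⟩ : Nonempty (c.ord.ToType ≃ α × α) := by
    rw [← Cardinal.eq, Cardinal.mk_toType, Cardinal.card_ord, hprod]
  have claim : ∀ (i : c.ord.ToType) (g : ∀ j, j < i → α),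
      (S (e i).1 \ {x | ∃ j, ∃ h : j < i, g j h = x}).Nonempty := by
    intro i g
    have h1 : #{x | ∃ j, ∃ h : j < i, g j h = x} < c := by
      have : #{x | ∃ j, ∃ h : j < i, g j h = x} ≤ #(Iio i) := by
        apply Cardinal.mk_le_of_surjective (f := fun j : Iio i => (⟨g j j.2, j, j.2, rfl⟩ :
          {x | ∃ j, ∃ h : j < i, g j h = x}))
        rintro ⟨x, j, h, rfl⟩
        exact ⟨⟨j, h⟩, rfl⟩
      exact this.trans_lt (Cardinal.mk_Iio_ord_toType i)
    rw [Set.nonempty_iff_ne_empty]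
    intro hemp
    have := Set.diff_eq_empty.mp hemp
    exact absurd ((hS (e i).1).trans (Cardinal.mk_le_mk_of_subset this)) (not_le.mpr h1)
  haveI : IsWellFounded c.ord.ToType (· < ·) := inferInstance
  let F : c.ord.ToType → α := IsWellFounded.fix (· < ·)
    (fun i g => (claim i g).some)
  have hFeq : ∀ i, F i = (claim i (fun j _ => F j)).some := fun i =>
    IsWellFounded.fix_eq _ _ i
  have hFmem : ∀ i, F i ∈ S (e i).1 \ {x | ∃ j, ∃ h : j < i, F j = x} := by
    intro i; rw [hFeq i]; exact (claim i _).some_mem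
  have hFinj : Function.Injective F := by
    intro i j hij
    rcases lt_trichotomy i j with h | h | h
    · exact absurd ⟨i, h, hij⟩ (hFmem j).2
    · exact h
    · exact absurd ⟨j, h, hij.symm⟩ (hFmem i).2
  refine ⟨F ∘ e.symm, hFinj.comp e.symm.injective, fun p => ?_⟩
  have := (hFmem (e.symm p)).1
  rwa [e.apply_symm_apply] at this

theorem stmt1 (κ lam : Cardinal.{0}) (hreg : κ.IsRegular) (hunc : ℵ₀ < κ)
    (hlam : κ ≤ lam) (A : Set SOrd) (hA : A ⊆ Pkl κ lam)
    (hApos : ∀ b ∈ Pkl κ lam, ∃ a ∈ A, b ⊆ a)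
    (hsize : ∀ b ∈ Pkl κ lam, #(↥{a ∈ A | b ⊆ a}) = #A) :
    ∃ P : Set (Set SOrd), (∀ p ∈ P, p ⊆ A) ∧
      (∀ p ∈ P, ∀ q ∈ P, p ≠ q → p ∩ q = ∅) ∧ ⋃₀ P = A ∧ #P = #A ∧
      ∀ p ∈ P, ∀ b ∈ Pkl κ lam, ∃ a ∈ p, b ⊆ a := by
  classical
  have hκℵ : ℵ₀ ≤ Cardinal.lift.{1} κ := Cardinal.aleph0_le_lift.mpr hunc.le
  have hIio : #(Set.Iio lam.ord) = Cardinal.lift.{1} lam := by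
    simpa using Ordinal.mk_Iio_ordinal lam.ord
  have hempty : (∅ : SOrd) ∈ Pkl κ lam := by
    refine ⟨fun x hx => absurd hx (Set.notMem_empty x), ?_⟩
    simpa using lt_of_lt_of_le (aleph0_pos) hκℵ
  have hAne : A.Nonempty := by
    obtain ⟨a, ha, -⟩ := hApos ∅ hempty; exact ⟨a, ha⟩
  -- A is infinite
  have hstep : ∀ a ∈ A, ∃ a' ∈ A, a ⊂ a' := by
    intro a ha
    obtain ⟨h1, h2⟩ := hA ha
    have hsub : ¬ (Set.Iio lam.ord ⊆ a) := by
      intro h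
      have h3 := Cardinal.mk_le_mk_of_subset h
      rw [hIio] at h3
      exact absurd (h3.trans_lt (h2.trans_le (Cardinal.lift_le.mpr hlam)))
        (lt_irrefl _)
    obtain ⟨γ, hγlt, hγa⟩ := Set.not_subset.mp hsub
    have hb : insert γ a ∈ Pkl κ lam := by
      refine ⟨?_, ?_⟩
      · intro x hx
        rcases hx with rfl | hx
        · exact hγlt
        · exact h1 x hx
      · exact (Cardinal.mk_insert_le).trans_lt
          (Cardinal.add_lt_of_lt hκℵ h2 (lt_of_lt_of_le Cardinal.one_lt_aleph0 hκℵ))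
    obtain ⟨a', ha', hba'⟩ := hApos _ hb
    exact ⟨a', ha', (Set.subset_insert γ a).trans hba',
      fun h => hγa (h (hba' (Set.mem_insert γ a)))⟩
  choose Fn hFn1 hFn2 using hstep
  let g : ℕ → ↥A := fun n => Nat.rec ⟨hAne.choose, hAne.choose_spec⟩
    (fun _ p => ⟨Fn p p.2, hFn1 p p.2⟩) n
  have hgmono : ∀ n, (g n).1 ⊂ (g (n+1)).1 := by
    intro n
    show (g n).1 ⊂ Fn (g n).1 (g n).2
    exact hFn2 (g n).1 (g n).2
  have hgsm : StrictMono (fun n => (g n).1) := strictMono_nat_of_lt_succ hgmono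
  haveI : Infinite ↥A := Infinite.of_injective g
    (fun m n h => hgsm.injective (congrArg Subtype.val h))
  have hAinf : ℵ₀ ≤ #(↥A) := Cardinal.aleph0_le_mk ↥A
  -- the selector
  set S : ↥A → Set ↥A := fun a => {x : ↥A | (a : SOrd) ⊆ (x : SOrd)} with hSdef
  have hS : ∀ a : ↥A, #(↥A) ≤ #(S a) := by
    intro a
    have h1 := hsize (a : SOrd) (hA a.2)
    have h2 : #(↥{x ∈ A | (a : SOrd) ⊆ x}) = #(S a) := by
      rw [Cardinal.mk_sep]
    rw [← h2, h1]
  obtain ⟨H, Hinj, Hmem⟩ := exists_inj_selector ↥A hAinf S hS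
  let f : ↥A → ↥A := fun x => if h : ∃ p, H p = x then h.choose.2 else x
  have hfH : ∀ p, f (H p) = p.2 := by
    intro p
    have h : ∃ q, H q = H p := ⟨p, rfl⟩
    have : h.choose = p := Hinj h.choose_spec
    simp only [f, dif_pos h, this]
  let pv : ↥A → Set SOrd := fun v => {x | ∃ hx : x ∈ A, f ⟨x, hx⟩ = v}
  have hpvmem : ∀ (p : ↥A × ↥A), ((H p : SOrd)) ∈ pv p.2 := by
    intro p
    exact ⟨(H p).2, by rw [Subtype.coe_eta]; exact hfH p⟩
  refine ⟨Set.range pv, ?_, ?_, ?_, ?_, ?_⟩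
  · rintro p ⟨v, rfl⟩ x ⟨hx, -⟩
    exact hx
  · rintro p ⟨v, rfl⟩ q ⟨w, rfl⟩ hne
    rw [Set.eq_empty_iff_forall_notMem]
    rintro x ⟨⟨hx1, hx2⟩, ⟨hy1, hy2⟩⟩
    exact hne (by rw [← hx2, ← hy2])
  · ext x
    constructor
    · rintro ⟨p, ⟨v, rfl⟩, hx, -⟩
      exact hx
    · intro hx
      exact ⟨pv (f ⟨x, hx⟩), ⟨f ⟨x, hx⟩, rfl⟩, hx, rfl⟩
  · have hpvinj : Function.Injective pv := by
      intro v w h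
      obtain ⟨hx, hfx⟩ := hpvmem (v, v)
      have h2 : (H (v, v) : SOrd) ∈ pv w := h ▸ hpvmem (v, v)
      obtain ⟨hy, hfy⟩ := h2
      exact hfx.symm.trans hfy
    rw [Cardinal.mk_range_eq pv hpvinj]
  · rintro p ⟨v, rfl⟩ b hb
    obtain ⟨a, ha, hba⟩ := hApos b hb
    refine ⟨(H (⟨a, ha⟩, v) : SOrd), hpvmem (⟨a, ha⟩, v), hba.trans ?_⟩
    exact Hmem (⟨a, ha⟩, v)

end
end

section
/- Let κ be a regular uncountable cardinal, λ ≥ κ, μ and θ cardinals with 1 ≤ μ ≤ λ, 2 ≤ θ ≤ κ, and θ̄ as defined below. Suppose μ < κ, or θ < κ, or κ is not a limit cardinal. Then there exists a [μ]^{<θ}-normal ideal on P_κ(λ) if and only if |P_{θ̄}(ρ)| < κ for every cardinal ρ < κ with ρ ≤ μ. -/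
open Cardinal Set

noncomputable section

lemma aux_mk_Iio (ρ : Cardinal.{0}) : #(Set.Iio ρ.ord) = Cardinal.lift.{1} ρ := by
  rw [Ordinal.mk_Iio_ordinal, Cardinal.card_ord]

lemma aux_lift_isRegular {κ : Cardinal.{0}} (h : κ.IsRegular) :
    (Cardinal.lift.{1} κ).IsRegular := by
  constructor
  · simpa using h.1
  · rw [← Cardinal.lift_ord, ← Ordinal.lift_cof]
    exact Cardinal.lift_le.mpr h.2

lemma aux_sSup_lt_ord {κ : Cardinal.{0}} (hreg : κ.IsRegular) {s : Set Ordinal.{0}}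
    (hs : #s < Cardinal.lift.{1} κ) (hb : ∀ o ∈ s, o < κ.ord) : sSup s < κ.ord := by
  obtain ⟨ρ, hρ⟩ := Cardinal.mem_range_lift_of_le hs.le
  have hν : Nonempty (ρ.ord.ToType ≃ ↥s) := by
    rw [← Cardinal.lift_mk_eq.{0,1,1}, Cardinal.mk_toType, Cardinal.card_ord, hρ]
    simp
  obtain ⟨e⟩ := hν
  have hr : Set.range (fun t => (e t).1) = s := by
    ext x; constructor
    · rintro ⟨t, rfl⟩; exact (e t).2
    · intro hx; exact ⟨e.symm ⟨x, hx⟩, by simp⟩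
  have h2 : sSup s = ⨆ t, (fun t => (e t).1) t := by rw [iSup, hr]
  rw [h2]
  apply Ordinal.iSup_lt_ord
  · rw [Cardinal.mk_toType, Cardinal.card_ord, hreg.cof_eq]
    exact Cardinal.lift_lt.mp (hρ ▸ hs)
  · intro t; exact hb _ (e t).2

lemma aux_Iio_mem_Pkl {κ lam τ : Cardinal.{0}} (h1 : τ < κ) (h2 : κ ≤ lam) :
    Set.Iio τ.ord ∈ Pkl κ lam := by
  constructor
  · intro x hx
    exact lt_of_lt_of_le hx (Cardinal.ord_le_ord.mpr (h1.le.trans h2))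
  · rw [aux_mk_Iio]; exact Cardinal.lift_lt.mpr h1

lemma aux_empty_mem_Pkl {κ lam : Cardinal.{0}} (hκ : 0 < κ) : (∅ : SOrd) ∈ Pkl κ lam := by
  constructor
  · intro x hx; exact absurd hx (notMem_empty x)
  · rw [Cardinal.mk_emptyCollection]
    simpa using hκ

lemma aux_empty_mem_J {κ lam : Cardinal.{0}} {J} (hJ : IsIdeal κ lam J) (hκ : 0 < κ) :
    (∅ : Set SOrd) ∈ J :=
  hJ.noncof ⟨empty_subset _, ⟨∅, aux_empty_mem_Pkl hκ, fun a ha => absurd ha (notMem_empty a)⟩⟩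

lemma aux_pos_of_compl {κ lam : Cardinal.{0}} {J A} (hJ : IsIdeal κ lam J)
    (hunc : ℵ₀ ≤ κ) (hA : A ⊆ Pkl κ lam) (hc : Pkl κ lam \ A ∈ noncofinalIdeal κ lam) :
    JPos κ lam J A := by
  refine ⟨hA, fun hmem => ?_⟩
  have h2 : Pkl κ lam \ A ∈ J := hJ.noncof hc
  have hX : ({A, Pkl κ lam \ A} : Set (Set SOrd)) ⊆ J := by
    rintro B (rfl | rfl)
    exacts [hmem, h2]
  have hcard : #({A, Pkl κ lam \ A} : Set (Set SOrd)) < Cardinal.lift.{1} κ := by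
    have h1 : #({A, Pkl κ lam \ A} : Set (Set SOrd)) ≤ 1 + 1 := by
      refine Cardinal.mk_insert_le.trans ?_
      rw [Cardinal.mk_singleton]
    have h2 : (1 + 1 : Cardinal.{1}) < ℵ₀ := by
      have : ((2 : ℕ) : Cardinal.{1}) < ℵ₀ := Cardinal.nat_lt_aleph0 2
      rw [one_add_one_eq_two]; simpa using this
    refine h1.trans_lt (h2.trans_le ?_)
    rw [← Cardinal.lift_aleph0.{1,0}]
    exact Cardinal.lift_le.mpr hunc
  have := hJ.unionlt _ hX hcard
  rw [Set.sUnion_pair, Set.union_diff_cancel hA] at this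
  exact hJ.proper this

lemma aux_thetabar_le {κ θ θbar : Cardinal.{0}} (htb : IsThetaBar κ θ θbar) : θbar ≤ θ := by
  rcases htb with ⟨h1, h2⟩ | ⟨h1, h2, h3⟩ | ⟨ν, h1, h2, h3⟩
  · exact le_of_eq h2
  · exact le_of_eq h3
  · rw [h3, h1, h2]; exact (Order.lt_succ ν).le

lemma aux_forward (κ lam μ θ θbar : Cardinal.{0}) (hreg : κ.IsRegular)
    (hlam : κ ≤ lam) (hθκ : θ ≤ κ) (htb : IsThetaBar κ θ θbar)
    {J} (hJ : IsIdeal κ lam J) (hN : SeqNormal κ lam μ θ J) :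
    ∀ ρ : Cardinal.{0}, ρ < κ → ρ ≤ μ →
      #(↥{e : SOrd | e ⊆ Set.Iio ρ.ord ∧ #e < Cardinal.lift.{1} θbar}) < Cardinal.lift.{1} κ := by
  intro ρ hρκ hρμ
  by_contra hS
  push_neg at hS
  set S := {e : SOrd | e ⊆ Set.Iio ρ.ord ∧ #e < Cardinal.lift.{1} θbar} with hSdef
  have hκpos : (0 : Cardinal.{0}) < κ := lt_of_lt_of_le Cardinal.aleph0_pos hreg.1
  have htbθ := aux_thetabar_le htb
  -- choose σ
  obtain ⟨σ, hσκ, hσθ, hσsm⟩ :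
      ∃ σ : Cardinal.{0}, σ < κ ∧ σ ≤ θ ∧ ∀ e ∈ S, #e < Cardinal.lift.{1} σ := by
    by_cases hbk : θbar < κ
    · exact ⟨θbar, hbk, htbθ, fun e he => he.2⟩
    · have hbeq : θbar = κ := le_antisymm (htbθ.trans hθκ) (not_lt.mp hbk)
      have hθeq : θ = κ := le_antisymm hθκ (hbeq ▸ htbθ)
      have hlim : ∀ ν, Order.succ ν ≠ κ := by
        rcases htb with ⟨h1, h2⟩ | ⟨h1, h2, h3⟩ | ⟨ν, h1, h2, h3⟩
        · exact absurd hθeq h1.ne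
        · exact h2
        · exfalso
          have hνκ : ν = κ := h3.symm.trans hbeq
          have : κ < κ := by
            conv_rhs => rw [h2, hνκ]
            exact Order.lt_succ κ
          exact absurd this (lt_irrefl κ)
      refine ⟨Order.succ ρ, lt_of_le_of_ne (Order.succ_le_of_lt hρκ) (hlim ρ),
        (Order.succ_le_of_lt hρκ).trans_eq hθeq.symm, ?_⟩
      intro e he
      have h1 : #e ≤ Cardinal.lift.{1} ρ := (mk_le_mk_of_subset he.1).trans_eq (aux_mk_Iio ρ)
      rw [Cardinal.lift_succ]
      exact Order.lt_succ_iff.mpr h1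
  set τ := max ρ σ with hτdef
  have hτκ : τ < κ := max_lt hρκ hσκ
  set A := {a | a ∈ Pkl κ lam ∧ Set.Iio τ.ord ⊆ a} with hAdef
  have hApos : JPos κ lam J A := by
    refine aux_pos_of_compl hJ hreg.1 (fun a ha => ha.1) ?_
    refine ⟨diff_subset, Set.Iio τ.ord, aux_Iio_mem_Pkl hτκ hlam, ?_⟩
    intro a ha hsub
    exact ha.2 ⟨ha.1, hsub⟩
  obtain ⟨emb⟩ : Nonempty (↥(Set.Iio κ.ord) ↪ ↥S) := by
    rw [← Cardinal.le_def, aux_mk_Iio]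
    exact hS
  have hsup : ∀ a ∈ Pkl κ lam, sSup (a ∩ Set.Iio κ.ord) < κ.ord := by
    intro a ha
    exact aux_sSup_lt_ord hreg
      (lt_of_le_of_lt (mk_le_mk_of_subset inter_subset_left) ha.2) (fun o ho => ho.2)
  set f : SOrd → SOrd := fun a =>
    if h : sSup (a ∩ Set.Iio κ.ord) < κ.ord then (emb ⟨_, h⟩).1 else ∅ with hfdef
  have hfval : ∀ a, ∀ ha : a ∈ Pkl κ lam,
      f a = (emb ⟨sSup (a ∩ Set.Iio κ.ord), hsup a ha⟩).1 := by
    intro a ha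
    simp only [hfdef, dif_pos (hsup a ha)]
  have hfS : ∀ a ∈ Pkl κ lam, f a ∈ S := by
    intro a ha
    rw [hfval a ha]
    exact (emb _).2
  have hcond : ∀ a ∈ A, f a ⊆ a ∩ Set.Iio μ.ord ∧ #(f a) < Cardinal.lift.{1} θ ∧
      #(f a) < #(↥(a ∩ Set.Iio θ.ord)) := by
    intro a ha
    have haP : a ∈ Pkl κ lam := ha.1
    have hfa := hfS a haP
    refine ⟨?_, ?_, ?_⟩
    · intro x hx
      have hxρ : x < ρ.ord := hfa.1 hx
      constructor
      · exact ha.2 (lt_of_lt_of_le hxρ (Cardinal.ord_le_ord.mpr (le_max_left ρ σ)))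
      · exact lt_of_lt_of_le hxρ (Cardinal.ord_le_ord.mpr hρμ)
    · exact lt_of_lt_of_le hfa.2 (Cardinal.lift_le.mpr htbθ)
    · have h1 : Set.Iio σ.ord ⊆ a ∩ Set.Iio θ.ord := by
        intro x hx
        constructor
        · exact ha.2 (lt_of_lt_of_le hx (Cardinal.ord_le_ord.mpr (le_max_right ρ σ)))
        · exact lt_of_lt_of_le hx (Cardinal.ord_le_ord.mpr hσθ)
      calc #(f a) < Cardinal.lift.{1} σ := hσsm _ hfa
        _ = #(Set.Iio σ.ord) := (aux_mk_Iio σ).symm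
        _ ≤ #(↥(a ∩ Set.Iio θ.ord)) := mk_le_mk_of_subset h1
  obtain ⟨B, hBpos, hBA, c, hc⟩ := hN A hApos f hcond
  obtain ⟨a₀, ha₀⟩ : B.Nonempty := by
    rw [Set.nonempty_iff_ne_empty]
    rintro rfl
    exact hBpos.2 (aux_empty_mem_J hJ hκpos)
  have ha₀P : a₀ ∈ Pkl κ lam := hApos.1 (hBA ha₀)
  set β := sSup (a₀ ∩ Set.Iio κ.ord) with hβdef
  have hβ : β < κ.ord := hsup a₀ ha₀P
  set Fib := {a | a ∈ Pkl κ lam ∧ sSup (a ∩ Set.Iio κ.ord) = β} with hFibdef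
  have hFib : Fib ∈ noncofinalIdeal κ lam := by
    refine ⟨fun a ha => ha.1, {Order.succ β}, ?_, ?_⟩
    · constructor
      · intro x hx
        rw [mem_singleton_iff] at hx
        subst hx
        exact lt_of_lt_of_le ((Cardinal.isSuccLimit_ord hreg.1).succ_lt hβ)
          (Cardinal.ord_le_ord.mpr hlam)
      · rw [Cardinal.mk_singleton]
        exact lt_of_lt_of_le Cardinal.one_lt_aleph0 (by simpa using hreg.1)
    · rintro a ⟨haP, haeq⟩ hsub
      have hmem : Order.succ β ∈ a ∩ Set.Iio κ.ord :=
        ⟨hsub rfl, (Cardinal.isSuccLimit_ord hreg.1).succ_lt hβ⟩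
      have hbdd : BddAbove (a ∩ Set.Iio κ.ord) := ⟨κ.ord, fun x hx => hx.2.le⟩
      have := le_csSup hbdd hmem
      rw [haeq] at this
      exact absurd this (Order.lt_succ β).not_ge
  have hBFib : B ⊆ Fib := by
    intro a ha
    have haP : a ∈ Pkl κ lam := hApos.1 (hBA ha)
    refine ⟨haP, ?_⟩
    have h1 : f a = f a₀ := (hc a ha).trans (hc a₀ ha₀).symm
    rw [hfval a haP, hfval a₀ ha₀P] at h1
    have h2 := emb.injective (Subtype.ext h1)
    exact congrArg Subtype.val h2
  exact hBpos.2 (hJ.mono Fib (hJ.noncof hFib) B hBFib)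

/-! ### Backward direction -/

def SmS (μ θb : Cardinal.{0}) (x : SOrd) : Set SOrd :=
  {e | e ⊆ x ∩ Set.Iio μ.ord ∧ #e < Cardinal.lift.{1} θb}

def GLs (μ θb : Cardinal.{0}) (x : SOrd) : Set (List SOrd) :=
  {l | ∀ e ∈ l, e ∈ SmS μ θb x}

def DG (κ lam μ θb : Cardinal.{0}) (g : List SOrd → SOrd) : Set SOrd :=
  {a | a ∈ Pkl κ lam ∧ ∀ l ∈ GLs μ θb a, g l ⊆ a}

def GoodG (κ lam : Cardinal.{0}) (g : List SOrd → SOrd) : Prop :=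
  ∀ l, (∀ x ∈ g l, x < lam.ord) ∧ #(g l) < Cardinal.lift.{1} κ

def myJ (κ lam μ θb : Cardinal.{0}) : Set (Set SOrd) :=
  {A | A ⊆ Pkl κ lam ∧ ∃ g, GoodG κ lam g ∧ A ∩ DG κ lam μ θb g = ∅}

def stepC (μ θb : Cardinal.{0}) (g : List SOrd → SOrd) (x : SOrd) : SOrd :=
  x ∪ ⋃ l ∈ GLs μ θb x, g l

def FC (μ θb : Cardinal.{0}) (g : List SOrd → SOrd) : Ordinal.{0} → SOrd :=
  Ordinal.lt_wf.fix (C := fun _ => SOrd)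
    fun i rec => ⋃ j : ↥(Set.Iio i), stepC μ θb g (rec j.1 j.2)

lemma FC_eq (μ θb : Cardinal.{0}) (g : List SOrd → SOrd) (i : Ordinal.{0}) :
    FC μ θb g i = ⋃ j : ↥(Set.Iio i), stepC μ θb g (FC μ θb g j.1) := by
  rw [FC]
  rw [WellFounded.fix_eq]

lemma mem_FC {μ θb : Cardinal.{0}} {g : List SOrd → SOrd} {i : Ordinal.{0}} {x : Ordinal} :
    x ∈ FC μ θb g i ↔ ∃ j, j < i ∧ x ∈ stepC μ θb g (FC μ θb g j) := by
  rw [FC_eq]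
  simp only [mem_iUnion, Subtype.exists, mem_Iio, exists_prop]

lemma FC_mono {μ θb : Cardinal.{0}} {g : List SOrd → SOrd} {i i' : Ordinal.{0}}
    (h : i ≤ i') : FC μ θb g i ⊆ FC μ θb g i' := by
  intro x hx
  rw [mem_FC] at hx ⊢
  obtain ⟨j, hj, hx⟩ := hx
  exact ⟨j, hj.trans_le h, hx⟩

lemma aux_GLs_card {κ μ θb : Cardinal.{0}} (hunc : ℵ₀ < κ)
    (hsmall : ∀ x : SOrd, #x < Cardinal.lift.{1} κ → #(SmS μ θb x) < Cardinal.lift.{1} κ)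
    {x : SOrd} (hx : #x < Cardinal.lift.{1} κ) :
    #(GLs μ θb x) < Cardinal.lift.{1} κ := by
  have haleph : ℵ₀ < Cardinal.lift.{1} κ := by
    rw [← Cardinal.lift_aleph0.{1,0}]; exact Cardinal.lift_lt.mpr hunc
  have hinj : ∃ F : ↥(GLs μ θb x) → List ↥(SmS μ θb x), Function.Injective F := by
    refine ⟨fun l => l.1.pmap (fun e he => (⟨e, he⟩ : ↥(SmS μ θb x))) l.2, ?_⟩
    intro l₁ l₂ h
    have key : ∀ (l : ↥(GLs μ θb x)),
        (l.1.pmap (fun e he => (⟨e, he⟩ : ↥(SmS μ θb x))) l.2).map Subtype.val = l.1 := by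
      intro l
      exact (List.map_pmap _).trans ((List.pmap_eq_map (f := id) _).trans (List.map_id _))
    have := congrArg (List.map Subtype.val) h
    rw [key l₁, key l₂] at this
    exact Subtype.ext this
  obtain ⟨F, hF⟩ := hinj
  calc #(GLs μ θb x) ≤ #(List ↥(SmS μ θb x)) := Cardinal.mk_le_of_injective hF
    _ ≤ max ℵ₀ #(SmS μ θb x) := Cardinal.mk_list_le_max _
    _ < Cardinal.lift.{1} κ := max_lt haleph (hsmall x hx)

lemma aux_step_card {κ lam μ θb : Cardinal.{0}} (hreg : κ.IsRegular) (hunc : ℵ₀ < κ)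
    (hsmall : ∀ x : SOrd, #x < Cardinal.lift.{1} κ → #(SmS μ θb x) < Cardinal.lift.{1} κ)
    {g : List SOrd → SOrd} (hg : GoodG κ lam g) {x : SOrd} (hx : #x < Cardinal.lift.{1} κ) :
    #(stepC μ θb g x) < Cardinal.lift.{1} κ := by
  have hlreg := aux_lift_isRegular hreg
  have h2 : #(⋃ l ∈ GLs μ θb x, g l) < Cardinal.lift.{1} κ := by
    refine lt_of_le_of_lt (Cardinal.mk_biUnion_le _ _) ?_
    apply Cardinal.mul_lt_of_lt hlreg.1 (aux_GLs_card hunc hsmall hx)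
    exact Cardinal.iSup_lt_of_isRegular hlreg (aux_GLs_card hunc hsmall hx)
      (fun l => (hg l.1).2)
  exact lt_of_le_of_lt (Cardinal.mk_union_le _ _)
    (Cardinal.add_lt_of_lt hlreg.1 hx h2)

lemma aux_step_el {κ lam μ θb : Cardinal.{0}} {g : List SOrd → SOrd} (hg : GoodG κ lam g)
    {x : SOrd} (hx : ∀ y ∈ x, y < lam.ord) : ∀ y ∈ stepC μ θb g x, y < lam.ord := by
  intro y hy
  rcases hy with hy | hy
  · exact hx y hy
  · simp only [mem_iUnion, exists_prop] at hy
    obtain ⟨l, _, hl⟩ := hy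
    exact (hg l).1 y hl

lemma aux_FC_bound {κ lam μ θb δ : Cardinal.{0}} (hreg : κ.IsRegular) (hunc : ℵ₀ < κ)
    (hsmall : ∀ x : SOrd, #x < Cardinal.lift.{1} κ → #(SmS μ θb x) < Cardinal.lift.{1} κ)
    (hδκ : δ < κ) {g : List SOrd → SOrd} (hg : GoodG κ lam g) :
    ∀ i, i ≤ δ.ord → #(FC μ θb g i) < Cardinal.lift.{1} κ ∧
      ∀ y ∈ FC μ θb g i, y < lam.ord := by
  have hlreg := aux_lift_isRegular hreg
  intro i
  induction i using Ordinal.induction with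
  | h i IH =>
    intro hi
    constructor
    · rw [FC_eq]
      refine lt_of_le_of_lt (Cardinal.mk_iUnion_le _) ?_
      have hι : #(↥(Set.Iio i)) < Cardinal.lift.{1} κ := by
        rw [Ordinal.mk_Iio_ordinal]
        refine lt_of_le_of_lt (Cardinal.lift_le.mpr (Ordinal.card_le_card hi)) ?_
        rw [Cardinal.card_ord]
        exact Cardinal.lift_lt.mpr hδκ
      apply Cardinal.mul_lt_of_lt hlreg.1 hι
      refine Cardinal.iSup_lt_of_isRegular hlreg hι (fun j => ?_)
      exact aux_step_card hreg hunc hsmall hg ((IH j.1 j.2) (j.2.le.trans hi)).1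
    · intro y hy
      rw [mem_FC] at hy
      obtain ⟨j, hj, hy⟩ := hy
      exact aux_step_el hg ((IH j hj) (hj.le.trans hi)).2 y hy

lemma aux_catch {μ θb δ : Cardinal.{0}}
    (hδ : δ.IsRegular) (hδθ : θb ≤ δ) {g : List SOrd → SOrd}
    {e : SOrd} (he : e ⊆ FC μ θb g δ.ord) (hce : #e < Cardinal.lift.{1} θb) :
    ∃ j < δ.ord, e ⊆ FC μ θb g j := by
  have hlim := Cardinal.isSuccLimit_ord hδ.1
  have hspec : ∀ x : ↥e, ∃ j, j < δ.ord ∧ x.1 ∈ FC μ θb g j := by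
    intro x
    have := he x.2
    rw [mem_FC] at this
    obtain ⟨j, hj, hx⟩ := this
    refine ⟨Order.succ j, hlim.succ_lt hj, ?_⟩
    rw [mem_FC]
    exact ⟨j, Order.lt_succ j, hx⟩
  choose jf hjf1 hjf2 using hspec
  set T := Set.range jf with hT
  have hTb : ∀ o ∈ T, o < δ.ord := by rintro o ⟨x, rfl⟩; exact hjf1 x
  have hTcard : #T < Cardinal.lift.{1} δ :=
    lt_of_le_of_lt Cardinal.mk_range_le (hce.trans_le (Cardinal.lift_le.mpr hδθ))
  have hsup : sSup T < δ.ord := aux_sSup_lt_ord hδ hTcard hTb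
  refine ⟨sSup T, hsup, ?_⟩
  intro x hx
  have h1 : jf ⟨x, hx⟩ ≤ sSup T := le_csSup ⟨δ.ord, fun o ho => (hTb o ho).le⟩ ⟨⟨x, hx⟩, rfl⟩
  exact FC_mono h1 (hjf2 ⟨x, hx⟩)

lemma aux_DG_nonempty {κ lam μ θb δ : Cardinal.{0}} (hreg : κ.IsRegular) (hunc : ℵ₀ < κ)
    (hsmall : ∀ x : SOrd, #x < Cardinal.lift.{1} κ → #(SmS μ θb x) < Cardinal.lift.{1} κ)
    (hδ : δ.IsRegular) (hδθ : θb ≤ δ) (hδκ : δ < κ)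
    {g : List SOrd → SOrd} (hg : GoodG κ lam g) :
    (DG κ lam μ θb g).Nonempty := by
  refine ⟨FC μ θb g δ.ord, ⟨?_, ?_⟩, ?_⟩
  · exact (aux_FC_bound hreg hunc hsmall hδκ hg δ.ord le_rfl).2
  · exact (aux_FC_bound hreg hunc hsmall hδκ hg δ.ord le_rfl).1
  · intro l hl
    have hcommon : ∀ l' : List SOrd, (∀ e ∈ l', e ∈ SmS μ θb (FC μ θb g δ.ord)) →
        ∃ j < δ.ord, ∀ e ∈ l', e ⊆ FC μ θb g j := by
      intro l' hl'
      induction l' with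
      | nil =>
        refine ⟨0, ?_, by simp⟩
        exact (Cardinal.isSuccLimit_ord hδ.1).pos
      | cons e t IHt =>
        obtain ⟨j₁, hj₁, hj₁'⟩ := aux_catch hδ hδθ
          ((hl' e (List.mem_cons_self)).1.trans inter_subset_left)
          (hl' e (List.mem_cons_self)).2
        obtain ⟨j₂, hj₂, hj₂'⟩ := IHt (fun e' he' => hl' e' (List.mem_cons_of_mem e he'))
        refine ⟨max j₁ j₂, max_lt hj₁ hj₂, ?_⟩
        intro e' he'
        rcases List.mem_cons.mp he' with rfl | he'
        · exact hj₁'.trans (FC_mono (le_max_left _ _))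
        · exact (hj₂' e' he').trans (FC_mono (le_max_right _ _))
    obtain ⟨j, hj, hsub⟩ := hcommon l hl
    have hlj : l ∈ GLs μ θb (FC μ θb g j) := by
      intro e he
      exact ⟨subset_inter (hsub e he) (fun x hx => ((hl e he).1 hx).2), (hl e he).2⟩
    have h1 : g l ⊆ stepC μ θb g (FC μ θb g j) := by
      intro x hx
      right
      simp only [mem_iUnion, exists_prop]
      exact ⟨l, hlj, hx⟩
    intro x hx
    rw [mem_FC]
    exact ⟨j, hj, h1 hx⟩

lemma myJ_isIdeal {κ lam μ θb δ : Cardinal.{0}} (hreg : κ.IsRegular) (hunc : ℵ₀ < κ)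
    (hsmall : ∀ x : SOrd, #x < Cardinal.lift.{1} κ → #(SmS μ θb x) < Cardinal.lift.{1} κ)
    (hδ : δ.IsRegular) (hδθ : θb ≤ δ) (hδκ : δ < κ) :
    IsIdeal κ lam (myJ κ lam μ θb) := by
  have hlreg := aux_lift_isRegular hreg
  constructor
  · -- noncof
    rintro A ⟨hA, b, hb, hbw⟩
    refine ⟨hA, fun _ => b, fun l => ⟨hb.1, hb.2⟩, ?_⟩
    rw [Set.eq_empty_iff_forall_notMem]
    rintro a ⟨haA, haD⟩
    exact hbw a haA (haD.2 [] (fun e he => absurd he (fun h => List.not_mem_nil h)))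
  · -- subset_Pkl
    exact fun A hA => hA.1
  · -- proper
    rintro ⟨_, g, hg, hempty⟩
    obtain ⟨a, ha⟩ := aux_DG_nonempty hreg hunc hsmall hδ hδθ hδκ hg
    rw [Set.eq_empty_iff_forall_notMem] at hempty
    exact hempty a ⟨ha.1, ha⟩
  · -- mono
    rintro A ⟨hA, g, hg, hempty⟩ B hBA
    refine ⟨hBA.trans hA, g, hg, ?_⟩
    rw [Set.eq_empty_iff_forall_notMem] at hempty ⊢
    exact fun a ha => hempty a ⟨hBA ha.1, ha.2⟩
  · -- unionlt
    intro X hX hXcard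
    have hch : ∀ A : ↥X, ∃ g, GoodG κ lam g ∧ A.1 ∩ DG κ lam μ θb g = ∅ :=
      fun A => (hX A.2).2
    choose gA hgood hempt using hch
    refine ⟨?_, fun l => ⋃ A : ↥X, gA A l, ?_, ?_⟩
    · rintro x ⟨A, hA, hx⟩
      exact (hX hA).1 hx
    · intro l
      constructor
      · intro x hx
        simp only [mem_iUnion] at hx
        obtain ⟨A, hx⟩ := hx
        exact (hgood A l).1 x hx
      · refine lt_of_le_of_lt (Cardinal.mk_iUnion_le _) ?_
        exact Cardinal.mul_lt_of_lt hlreg.1 hXcard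
          (Cardinal.iSup_lt_of_isRegular hlreg hXcard (fun A => (hgood A l).2))
    · rw [Set.eq_empty_iff_forall_notMem]
      rintro a ⟨⟨A, hA, haA⟩, haD⟩
      have haDA : a ∈ DG κ lam μ θb (gA ⟨A, hA⟩) := by
        refine ⟨haD.1, fun l hl x hx => ?_⟩
        exact haD.2 l hl (mem_iUnion.mpr ⟨⟨A, hA⟩, hx⟩)
      have := hempt ⟨A, hA⟩
      rw [Set.eq_empty_iff_forall_notMem] at this
      exact this a ⟨haA, haDA⟩

lemma aux_fa_small {κ μ θ θbar θb : Cardinal.{0}} (htb : IsThetaBar κ θ θbar)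
    (hθb : θb = min θbar (Order.succ μ)) :
    ∀ a : SOrd, #a < Cardinal.lift.{1} κ → ∀ s : SOrd, s ⊆ a ∩ Set.Iio μ.ord →
      (#s) < Cardinal.lift.{1} θ → #s < #(↥(a ∩ Set.Iio θ.ord)) →
      (#s) < Cardinal.lift.{1} θb := by
  intro a ha s hs h1 h2
  rw [hθb, Cardinal.lift_min, lt_min_iff]
  constructor
  · -- < lift θbar
    rcases htb with ⟨hc1, hc2⟩ | ⟨hc1, hc2, hc3⟩ | ⟨ν, hc1, hc2, hc3⟩
    · rw [hc2]; exact h1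
    · rw [hc3, hc1]
      exact lt_of_le_of_lt (mk_le_mk_of_subset (hs.trans inter_subset_left)) ha
    · rw [hc3]
      have ha2 : #a ≤ Cardinal.lift.{1} ν := by
        rw [hc2, Cardinal.lift_succ] at ha
        exact Order.lt_succ_iff.mp ha
      exact lt_of_lt_of_le h2 ((mk_le_mk_of_subset inter_subset_left).trans ha2)
  · -- < lift (succ μ)
    rw [Cardinal.lift_succ]
    refine Order.lt_succ_iff.mpr ?_
    refine (mk_le_mk_of_subset (hs.trans inter_subset_right)).trans ?_
    rw [aux_mk_Iio]

lemma myJ_seqNormal {κ lam μ θ θbar θb : Cardinal.{0}} (hreg : κ.IsRegular) (hunc : ℵ₀ < κ)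
    (htb : IsThetaBar κ θ θbar) (hθb : θb = min θbar (Order.succ μ)) :
    SeqNormal κ lam μ θ (myJ κ lam μ θb) := by
  intro A hA f hf
  by_contra hno
  have hBc : ∀ c : SOrd, {a | a ∈ A ∧ f a = c} ∈ myJ κ lam μ θb := by
    intro c
    by_contra hpos
    exact hno ⟨{a | a ∈ A ∧ f a = c}, ⟨fun a ha => hA.1 ha.1, hpos⟩,
      fun a ha => ha.1, c, fun a ha => ha.2⟩
  have hBc2 : ∀ c : SOrd, ∃ g, GoodG κ lam g ∧
      {a | a ∈ A ∧ f a = c} ∩ DG κ lam μ θb g = ∅ := fun c => (hBc c).2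
  choose gc hgood hempt using hBc2
  set gstar : List SOrd → SOrd := fun l =>
    match l with
    | [] => (∅ : SOrd)
    | c :: l' => gc c l' with hgstar
  have hgoodstar : GoodG κ lam gstar := by
    intro l
    match l with
    | [] =>
      refine ⟨fun x hx => absurd hx (notMem_empty x), ?_⟩
      rw [Cardinal.mk_emptyCollection]
      exact lt_of_lt_of_le (by simpa using Cardinal.aleph0_pos)
        (by rw [← Cardinal.lift_aleph0.{1,0}]; exact Cardinal.lift_le.mpr hreg.1)
    | c :: l' => exact hgood c l'
  apply hA.2
  refine ⟨hA.1, gstar, hgoodstar, ?_⟩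
  rw [Set.eq_empty_iff_forall_notMem]
  rintro a ⟨haA, haD⟩
  set c := f a with hc
  have haP : a ∈ Pkl κ lam := hA.1 haA
  have hcS : c ∈ SmS μ θb a := by
    refine ⟨(hf a haA).1, ?_⟩
    exact aux_fa_small htb hθb a haP.2 c (hf a haA).1 (hf a haA).2.1 (hf a haA).2.2
  have haDc : a ∈ DG κ lam μ θb (gc c) := by
    refine ⟨haP, fun l hl => ?_⟩
    have hcons : (c :: l) ∈ GLs μ θb a := by
      intro e he
      rcases List.mem_cons.mp he with rfl | he
      · exact hcS
      · exact hl e he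
    exact haD.2 (c :: l) hcons
  have := hempt c
  rw [Set.eq_empty_iff_forall_notMem] at this
  exact this a ⟨⟨haA, rfl⟩, haDc⟩

lemma aux_small {κ μ θbar θb : Cardinal.{0}} (hθb : θb ≤ θbar)
    (hrhs : ∀ ρ : Cardinal.{0}, ρ < κ → ρ ≤ μ →
      #(↥{e : SOrd | e ⊆ Set.Iio ρ.ord ∧ #e < Cardinal.lift.{1} θbar}) < Cardinal.lift.{1} κ) :
    ∀ x : SOrd, #x < Cardinal.lift.{1} κ → #(SmS μ θb x) < Cardinal.lift.{1} κ := by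
  intro x hx
  set y := x ∩ Set.Iio μ.ord with hy
  have hy1 : #y ≤ Cardinal.lift.{1} μ :=
    (mk_le_mk_of_subset inter_subset_right).trans_eq (aux_mk_Iio μ)
  have hy2 : #y < Cardinal.lift.{1} κ :=
    (mk_le_mk_of_subset inter_subset_left).trans_lt hx
  obtain ⟨ρ, hρ⟩ := Cardinal.mem_range_lift_of_le hy1
  have hρμ : ρ ≤ μ := Cardinal.lift_le.mp (hρ ▸ hy1)
  have hρκ : ρ < κ := Cardinal.lift_lt.mp (hρ ▸ hy2)
  have hmk : #(↥y) = #(↥(Set.Iio ρ.ord)) := by rw [aux_mk_Iio, ← hρ]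
  obtain ⟨E⟩ := Cardinal.eq.mp hmk
  set Φ : SOrd → SOrd := fun e => (fun z : ↥y => (E z).1) '' {z : ↥y | z.1 ∈ e} with hΦ
  have hΦsub : ∀ e, Φ e ⊆ Set.Iio ρ.ord := by
    rintro e o ⟨z, hz, rfl⟩
    exact (E z).2
  have hΦcard : ∀ e, #(Φ e) ≤ #e := by
    intro e
    refine (Cardinal.mk_image_le).trans ?_
    refine Cardinal.mk_le_of_injective (f := fun w : ↥{z : ↥y | z.1 ∈ e} =>
      (⟨w.1.1, w.2⟩ : ↥e)) ?_
    intro w₁ w₂ h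
    simp only [Subtype.mk.injEq] at h
    exact Subtype.ext (Subtype.ext h)
  have hΦinj : ∀ e₁ e₂ : SOrd, e₁ ⊆ y → e₂ ⊆ y → Φ e₁ = Φ e₂ → e₁ = e₂ := by
    have key : ∀ e₁ e₂ : SOrd, e₁ ⊆ y → e₂ ⊆ y → Φ e₁ = Φ e₂ → e₁ ⊆ e₂ := by
      intro e₁ e₂ h1 h2 h x hx'
      have : (E ⟨x, h1 hx'⟩).1 ∈ Φ e₁ := ⟨⟨x, h1 hx'⟩, hx', rfl⟩
      rw [h] at this
      obtain ⟨z₂, hz₂, hval⟩ := this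
      have : z₂ = ⟨x, h1 hx'⟩ := E.injective (Subtype.ext hval)
      rw [this] at hz₂
      exact hz₂
    intro e₁ e₂ h1 h2 h
    exact Set.Subset.antisymm (key e₁ e₂ h1 h2 h) (key e₂ e₁ h2 h1 h.symm)
  have hF : ∃ F : ↥(SmS μ θb x) →
      ↥{e : SOrd | e ⊆ Set.Iio ρ.ord ∧ #e < Cardinal.lift.{1} θbar}, Function.Injective F := by
    refine ⟨fun e => ⟨Φ e.1, hΦsub e.1, ?_⟩, ?_⟩
    · exact lt_of_le_of_lt (hΦcard e.1)
        (lt_of_lt_of_le e.2.2 (Cardinal.lift_le.mpr hθb))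
    · intro e₁ e₂ h
      exact Subtype.ext (hΦinj e₁.1 e₂.1 e₁.2.1 e₂.2.1 (congrArg Subtype.val h))
  obtain ⟨F, hFinj⟩ := hF
  exact lt_of_le_of_lt (Cardinal.mk_le_of_injective hFinj) (hrhs ρ hρκ hρμ)

lemma aux_delta {κ μ θ θbar θb : Cardinal.{0}} (hreg : κ.IsRegular) (hunc : ℵ₀ < κ)
    (hθκ : θ ≤ κ) (htb : IsThetaBar κ θ θbar) (hθb : θb = min θbar (Order.succ μ))
    (hcase : μ < κ ∨ θ < κ ∨ ∃ ν, κ = Order.succ ν)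
    (hrhs : ∀ ρ : Cardinal.{0}, ρ < κ → ρ ≤ μ →
      #(↥{e : SOrd | e ⊆ Set.Iio ρ.ord ∧ #e < Cardinal.lift.{1} θbar}) < Cardinal.lift.{1} κ) :
    ∃ δ : Cardinal.{0}, δ.IsRegular ∧ θb ≤ δ ∧ δ < κ := by
  have hθbbar : θb ≤ θbar := hθb ▸ min_le_left _ _
  have hθbsucc : θb ≤ Order.succ μ := hθb ▸ min_le_right _ _
  have hθbκ : θb < κ := by
    rcases htb with ⟨h1, h2⟩ | ⟨h1, h2, h3⟩ | ⟨ν, h1, h2, h3⟩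
    · calc θb ≤ θbar := hθbbar
        _ = θ := h2
        _ < κ := h1
    · have hμκ : μ < κ := by
        rcases hcase with hc | hc | ⟨ν, hc⟩
        · exact hc
        · exact absurd h1 hc.ne
        · exact absurd hc.symm (h2 ν)
      have hsm : Order.succ μ < κ :=
        lt_of_le_of_ne (Order.succ_le_of_lt hμκ) (h2 μ)
      exact hθbsucc.trans_lt hsm
    · calc θb ≤ θbar := hθbbar
        _ = ν := h3
        _ < Order.succ ν := Order.lt_succ ν
        _ = κ := h2.symm
  by_cases hω : θb ≤ ℵ₀
  · exact ⟨ℵ₀, Cardinal.isRegular_aleph0, hω, hunc⟩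
  push_neg at hω
  by_cases hsucc : Order.succ θb < κ
  · exact ⟨Order.succ θb, Cardinal.isRegular_succ hω.le, Order.le_succ _, hsucc⟩
  have hκeq : κ = Order.succ θb :=
    le_antisymm (not_lt.mp hsucc) (Order.succ_le_of_lt hθbκ)
  refine ⟨θb, ?_, le_rfl, hθbκ⟩
  by_cases hbμ : θb ≤ μ
  · -- König's theorem case
    refine ⟨hω.le, ?_⟩
    by_contra hcof
    rw [not_le] at hcof
    set ν := θb
    set τ := ν.ord.cof with hτ
    have hτθbar : τ < θbar := hcof.trans_le hθbbar
    have hT := hrhs ν hθbκ hbμ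
    have hprod : #(↥(Set.Iio ν.ord) × ↥(Set.Iio ν.ord)) = #(↥(Set.Iio ν.ord)) := by
      rw [Cardinal.mk_prod, Cardinal.lift_id, aux_mk_Iio]
      exact Cardinal.mul_eq_self
        (by rw [← Cardinal.lift_aleph0.{1,0}]; exact Cardinal.lift_le.mpr hω.le)
    obtain ⟨p⟩ := Cardinal.eq.mp hprod
    obtain ⟨j⟩ : Nonempty (↥(Set.Iio τ.ord) ↪ ↥(Set.Iio ν.ord)) := by
      rw [← Cardinal.le_def, aux_mk_Iio, aux_mk_Iio]
      exact Cardinal.lift_le.mpr hcof.le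
    have hΨ : ∃ Ψ : (↥(Set.Iio τ.ord) → ↥(Set.Iio ν.ord)) →
        ↥{e : SOrd | e ⊆ Set.Iio ν.ord ∧ #e < Cardinal.lift.{1} θbar},
        Function.Injective Ψ := by
      refine ⟨fun h => ⟨Set.range (fun x => (p (j x, h x)).1), ?_, ?_⟩, ?_⟩
      · rintro o ⟨x, rfl⟩
        exact (p (j x, h x)).2
      · refine lt_of_le_of_lt Cardinal.mk_range_le ?_
        rw [aux_mk_Iio]
        exact Cardinal.lift_lt.mpr hτθbar
      · intro h₁ h₂ hh
        have hrange : Set.range (fun x => (p (j x, h₁ x)).1) =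
            Set.range (fun x => (p (j x, h₂ x)).1) := congrArg Subtype.val hh
        funext x
        have hmem : (p (j x, h₁ x)).1 ∈ Set.range (fun x => (p (j x, h₂ x)).1) := by
          rw [← hrange]; exact ⟨x, rfl⟩
        obtain ⟨x', hval⟩ := hmem
        have hp : (j x', h₂ x') = (j x, h₁ x) := p.injective (Subtype.ext hval)
        have hx' : x' = x := j.injective (congrArg Prod.fst hp)
        rw [hx'] at hp
        exact (congrArg Prod.snd hp).symm
    obtain ⟨Ψ, hΨinj⟩ := hΨ
    have hfun : #(↥(Set.Iio τ.ord) → ↥(Set.Iio ν.ord)) < Cardinal.lift.{1} κ :=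
      (Cardinal.mk_le_of_injective hΨinj).trans_lt hT
    rw [← Cardinal.power_def, aux_mk_Iio, aux_mk_Iio, ← Cardinal.lift_power,
      Cardinal.lift_lt] at hfun
    have hle : ν ^ τ ≤ ν := by
      rw [hκeq] at hfun
      exact Order.lt_succ_iff.mp hfun
    exact absurd hle (Cardinal.lt_power_cof hω.le).not_ge
  · -- θb = succ μ
    have heq : θb = Order.succ μ :=
      le_antisymm hθbsucc (Order.succ_le_of_lt (not_le.mp hbμ))
    rw [heq]
    refine Cardinal.isRegular_succ ?_
    rw [heq] at hω
    exact Order.lt_succ_iff.mp hω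

theorem stmt6 (κ lam μ θ θbar : Cardinal.{0}) (hreg : κ.IsRegular) (hunc : ℵ₀ < κ)
    (hlam : κ ≤ lam) (hμ1 : 1 ≤ μ) (hmul : μ ≤ lam) (hθ2 : 2 ≤ θ) (hθκ : θ ≤ κ)
    (htb : IsThetaBar κ θ θbar)
    (hcase : μ < κ ∨ θ < κ ∨ ∃ ν, κ = Order.succ ν) :
    (∃ J, IsIdeal κ lam J ∧ SeqNormal κ lam μ θ J) ↔
      ∀ ρ : Cardinal.{0}, ρ < κ → ρ ≤ μ →
        #(↥{e : SOrd | e ⊆ Set.Iio ρ.ord ∧ #e < Cardinal.lift.{1} θbar}) <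
          Cardinal.lift.{1} κ := by
  constructor
  · rintro ⟨J, hJ, hN⟩
    exact aux_forward κ lam μ θ θbar hreg hlam hθκ htb hJ hN
  · intro hrhs
    obtain ⟨δ, hδreg, hδθ, hδκ⟩ := aux_delta hreg hunc hθκ htb rfl hcase hrhs
    have hsmall := aux_small (min_le_left θbar (Order.succ μ)) hrhs
    exact ⟨myJ κ lam μ (min θbar (Order.succ μ)),
      myJ_isIdeal hreg hunc hsmall hδreg hδθ hδκ,
      myJ_seqNormal hreg hunc htb rfl⟩

end
end

section
/- Let κ be regular uncountable, λ > κ a singular cardinal with cf(λ) ≥ κ, set μ = cf(λ), and suppose u(μ⁺, τ) < λ for every cardinal τ with μ < τ < λ. Fix a continuous increasing sequence ⟨λ_β : β < μ⟩ of cardinals with union λ and λ₀ > μ, let E be the set of limit ordinals α < μ with cf(α) < κ, and for α ∈ E let W_α = {a ∈ P_κ(λ) : sup(a) = λ_α} (i.e., ⋃a = λ_α). Let B be the set of all a ∈ P_κ(λ) such that 0 ∈ a, γ+1 ∈ a for all γ ∈ a, a ∩ κ ∈ κ, a ∩ μ = {β < μ : λ_β ∈ a}, and every γ ∈ a satisfies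 γ < λ_β for some β ∈ a ∩ μ. Then for every R ⊆ B that is positive for the smallest μ-normal ideal NS^μ_{κ,λ}, the set {α ∈ E : |R ∩ W_α| ≥ u(μ⁺, λ_α)} is stationary in μ. -/
open Cardinal Set

noncomputable section

section Helpers

private lemma aleph0_le_lift_of_lt {κ : Cardinal.{0}} (h : ℵ₀ < κ) :
    (ℵ₀ : Cardinal.{1}) ≤ Cardinal.lift.{1} κ := by
  rw [← Cardinal.lift_aleph0.{1, 0}]
  exact Cardinal.lift_le.mpr h.le

private lemma singleton_mem_Pkl {κ lam : Cardinal.{0}} (hκ : ℵ₀ < κ) {x : Ordinal}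
    (hx : x < lam.ord) : ({x} : SOrd) ∈ Pkl κ lam := by
  constructor
  · intro y hy
    rw [Set.mem_singleton_iff] at hy
    subst hy
    exact hx
  · rw [Cardinal.mk_singleton]
    exact lt_of_lt_of_le Cardinal.one_lt_aleph0 (aleph0_le_lift_of_lt hκ)

private lemma notMem_noncof {κ lam : Cardinal.{0}} (hκ : ℵ₀ < κ) {x : Ordinal}
    (hx : x < lam.ord) : {a ∈ Pkl κ lam | x ∉ a} ∈ noncofinalIdeal κ lam := by
  refine ⟨Set.sep_subset _ _, {x}, singleton_mem_Pkl hκ hx, ?_⟩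
  intro a ha hsub
  exact ha.2 (hsub (Set.mem_singleton x))

private lemma empty_mem_ideal {κ lam : Cardinal.{0}} {J : Set (Set SOrd)}
    (hκ : ℵ₀ < κ) (hJ : IsIdeal κ lam J) : (∅ : Set SOrd) ∈ J := by
  have h := hJ.unionlt ∅ (fun x hx => absurd hx (Set.notMem_empty x)) ?_
  · simpa using h
  · rw [Cardinal.mk_emptyCollection]
    exact lt_of_lt_of_le Cardinal.aleph0_pos (aleph0_le_lift_of_lt hκ)

private lemma union2_mem {κ lam : Cardinal.{0}} {J : Set (Set SOrd)}
    (hκ : ℵ₀ < κ) (hJ : IsIdeal κ lam J) {A B : Set SOrd} (hA : A ∈ J) (hB : B ∈ J) :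
    A ∪ B ∈ J := by
  have h := hJ.unionlt {A, B} ?_ ?_
  · rwa [Set.sUnion_pair] at h
  · intro X hX
    rcases hX with rfl | rfl
    · exact hA
    · exact hB
  · have h2 : #({A, B} : Set (Set SOrd)) ≤ 2 := by
      refine le_trans Cardinal.mk_insert_le ?_
      rw [Cardinal.mk_singleton]
      norm_num
    exact lt_of_le_of_lt h2
      (lt_of_lt_of_le (by exact_mod_cast Cardinal.nat_lt_aleph0 2) (aleph0_le_lift_of_lt hκ))

private lemma bad_mem {κ lam μ : Cardinal.{0}} {J : Set (Set SOrd)}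
    (hκ : ℵ₀ < κ) (hJ : IsIdeal κ lam J) (hJn : MuNormal κ lam μ J)
    (δf : Ordinal → Ordinal) (hδ : ∀ β, β < μ.ord → δf β < lam.ord) :
    {a ∈ Pkl κ lam | ∃ β, β ∈ a ∧ β < μ.ord ∧ δf β ∉ a} ∈ J := by
  classical
  by_contra hBad
  set Bad := {a ∈ Pkl κ lam | ∃ β, β ∈ a ∧ β < μ.ord ∧ δf β ∉ a} with hBadDef
  have hpos : JPos κ lam J Bad := ⟨Set.sep_subset _ _, hBad⟩
  set f : SOrd → Ordinal := fun a =>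
    if h : ∃ β, β ∈ a ∧ β < μ.ord ∧ δf β ∉ a then h.choose else 0 with hf
  have hfspec : ∀ a ∈ Bad, (f a ∈ a ∧ f a < μ.ord) ∧ δf (f a) ∉ a := by
    intro a ha
    obtain ⟨-, hex⟩ := ha
    rw [hf]
    simp only [dif_pos hex]
    exact ⟨⟨hex.choose_spec.1, hex.choose_spec.2.1⟩, hex.choose_spec.2.2⟩
  obtain ⟨B, hBpos, hBsub, c, hc⟩ := hJn Bad hpos f (fun a ha => (hfspec a ha).1)
  obtain ⟨b0, hb0⟩ : B.Nonempty := by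
    rcases Set.eq_empty_or_nonempty B with rfl | h
    · exact absurd (empty_mem_ideal hκ hJ) hBpos.2
    · exact h
  have hcμ : c < μ.ord := by
    have := (hfspec b0 (hBsub hb0)).1.2
    rwa [hc b0 hb0] at this
  have hN : {a ∈ Pkl κ lam | δf c ∉ a} ∈ J := hJ.noncof (notMem_noncof hκ (hδ c hcμ))
  apply hBpos.2
  apply hJ.mono _ hN B
  intro a ha
  refine ⟨hBpos.1 ha, ?_⟩
  have := (hfspec a (hBsub ha)).2
  rwa [hc a ha] at this

private lemma club_tail {μo : Ordinal.{0}} {C : Set Ordinal} (hC : OrdClub μo C)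
    {γ1 : Ordinal} (hγ1 : γ1 ∈ C) : ∀ δ, δ < μo → γ1 ≤ δ → δ ∈ C := by
  intro δ
  induction δ using Ordinal.induction with
  | h δ IH =>
    intro hδμ hγδ
    rcases eq_or_lt_of_le hγδ with rfl | hlt
    · exact hγ1
    · refine hC.2.2 δ hδμ ?_ ?_
      · exact (lt_of_le_of_lt (zero_le : (0 : Ordinal) ≤ γ1) hlt).ne'
      · intro β hβ
        exact ⟨max β γ1, IH (max β γ1) (max_lt hβ hlt) (lt_trans (max_lt hβ hlt) hδμ)
          (le_max_right _ _), le_max_left _ _, max_lt hβ hlt⟩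

private lemma reindex {o : Ordinal.{0}} {S : Set Ordinal.{0}} (h : S ⊆ Set.Iio o) :
    ∃ (ι : Type) (f : ι → Ordinal.{0}), Set.range f = S ∧ Cardinal.lift.{1} #ι = #S := by
  classical
  refine ⟨{x : o.ToType // ((Ordinal.ToType.mk (o := o)).symm x : Ordinal) ∈ S},
    fun x => ((Ordinal.ToType.mk (o := o)).symm x.1 : Ordinal), ?_, ?_⟩
  · ext z
    constructor
    · rintro ⟨x, rfl⟩
      exact x.2
    · intro hz
      exact ⟨⟨(Ordinal.ToType.mk (o := o)) ⟨z, h hz⟩, by simp [hz]⟩, by simp⟩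
  · have he : Nonempty ({x : o.ToType // ((Ordinal.ToType.mk (o := o)).symm x : Ordinal) ∈ S} ≃ ↥S) := by
      refine ⟨⟨fun x => ⟨((Ordinal.ToType.mk (o := o)).symm x.1 : Ordinal), x.2⟩,
        fun s => ⟨(Ordinal.ToType.mk (o := o)) ⟨s.1, h s.2⟩, by simp [s.2]⟩, ?_, ?_⟩⟩
      · intro x
        ext
        simp
      · intro s
        ext
        simp
  
    have h2 := Cardinal.lift_mk_eq'.{0, 1}.mpr he
    simpa using h2

private lemma bset_struct {κ lam μ : Cardinal.{0}} {L : Ordinal.{0} → Cardinal.{0}}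
    (hunc : ℵ₀ < κ) (hcf : κ ≤ μ) (hregμ : μ.ord.cof = μ) (hμℵ : ℵ₀ ≤ μ)
    (hL : GoodSeq lam μ.ord L) {a : SOrd} (haB : a ∈ Bset κ lam μ.ord L) :
    ∃ α, (α ∈ Eset κ μ.ord ∧ sSup a = (L α).ord) ∧
      (∀ γ, γ ∈ a → γ < μ.ord → γ ≤ α) ∧
      (∀ η, η < (L α).ord → ∃ β, (β ∈ a ∧ β < μ.ord) ∧ η < (L β).ord) := by
  obtain ⟨haP, h0, hsucc, _hinit, hiffL, hbound⟩ := haB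
  have hμopos : (0 : Ordinal) < μ.ord := by
    rw [Cardinal.lt_ord]
    simpa using lt_of_lt_of_le Cardinal.aleph0_pos hμℵ
  have hμolim : Order.IsSuccLimit (μ.ord) := Cardinal.isSuccLimit_ord hμℵ
  set S : Set Ordinal := a ∩ Set.Iio μ.ord with hS
  have hSsub : S ⊆ Set.Iio μ.ord := Set.inter_subset_right
  have hSa : S ⊆ a := Set.inter_subset_left
  have hSbdd : BddAbove S := ⟨μ.ord, fun x hx => (hSsub hx).le⟩
  have h0S : (0 : Ordinal) ∈ S := ⟨h0, hμopos⟩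
  have hSne : S.Nonempty := ⟨0, h0S⟩
  have hSsucc : ∀ β ∈ S, β + 1 ∈ S := fun β hβ =>
    ⟨hsucc β (hSa hβ), by
      rw [Ordinal.add_one_eq_succ]
      exact hμolim.succ_lt (hSsub hβ)⟩
  set α := sSup S with hα
  have hle : ∀ γ ∈ S, γ ≤ α := fun γ hγ => le_csSup hSbdd hγ
  have hnm : α ∉ S := by
    intro hmem
    have h1 := hle _ (hSsucc α hmem)
    rw [Ordinal.add_one_eq_succ] at h1
    exact absurd h1 (not_le.mpr (Order.lt_succ α))
  have hlt : ∀ γ ∈ S, γ < α := fun γ hγ =>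
    lt_of_le_of_ne (hle γ hγ) (fun h => hnm (h ▸ hγ))
  have hlub : ∀ {b : Ordinal}, b < α → ∃ x ∈ S, b < x := fun {b} hb =>
    (lt_csSup_iff hSbdd hSne).mp hb
  obtain ⟨ι, f, hrange, hmk⟩ := reindex hSsub
  have hsup : α = ⨆ i, f i := by
    rw [hα, ← hrange]
    rfl
  have hικ : #ι < κ := by
    have h2 : Cardinal.lift.{1} #ι < Cardinal.lift.{1} κ := by
      rw [hmk]
      exact lt_of_le_of_lt (Cardinal.mk_le_mk_of_subset hSa) haP.2
    exact Cardinal.lift_lt.mp h2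
  have hfS : ∀ i, f i ∈ S := fun i => by
    rw [← hrange]
    exact Set.mem_range_self i
  have hαμ : α < μ.ord := by
    rw [hsup]
    exact Ordinal.iSup_lt_ord (by rw [hregμ]; exact lt_of_lt_of_le hικ hcf)
      (fun i => hSsub (hfS i))
  have hcofα : α.cof < κ := by
    have hflt : ∀ i, f i < ⨆ i, f i := fun i => by
      rw [← hsup]
      exact hlt _ (hfS i)
    have := Ordinal.cof_iSup_le hflt
    rw [← hsup] at this
    exact lt_of_le_of_lt this hικ
  have hαlim : Order.IsSuccLimit α := by
    rw [Ordinal.isSuccLimit_iff, Order.isSuccPrelimit_iff_succ_lt]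
    constructor
    · have h1 : (0 : Ordinal) + 1 ∈ S := hSsucc 0 h0S
      have h2 : (0 : Ordinal) < α := lt_of_lt_of_le (by norm_num) (hle _ h1)
      exact h2.ne'
    · intro b hb
      obtain ⟨x, hx, hbx⟩ := hlub hb
      have h1 := hle _ (hSsucc x hx)
      rw [Ordinal.add_one_eq_succ] at h1
      exact lt_of_lt_of_le (Order.succ_lt_succ hbx) h1
  have habdd : BddAbove a := ⟨lam.ord, fun x hx => (haP.1 x hx).le⟩
  have hane : a.Nonempty := ⟨0, h0⟩
  haveI hIne : Nonempty (Set.Iio α) := ⟨⟨0, hαlim.pos⟩⟩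
  have hcont : L α = ⨆ β : Set.Iio α, L β := hL.2.1 α hαμ hαlim
  have halt : ∀ γ ∈ a, γ < (L α).ord := by
    intro γ hγ
    obtain ⟨β, hβa, hβμ, hγβ⟩ := hbound γ hγ
    have hβα : β < α := hlt β ⟨hβa, hβμ⟩
    exact lt_trans hγβ (Cardinal.ord_lt_ord.mpr (hL.1 β α hβα hαμ))
  have hsupa : sSup a = (L α).ord := by
    apply le_antisymm
    · exact csSup_le hane (fun γ hγ => (halt γ hγ).le)
    · rw [Cardinal.ord_le, hcont]
      apply ciSup_le
      rintro ⟨β, hβ⟩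
      obtain ⟨x, hxS, hβx⟩ := hlub hβ
      have hxa : (L x).ord ∈ a := (hiffL x (hSsub hxS)).mp (hSa hxS)
      calc L β ≤ L x := (hL.1 β x hβx (hSsub hxS)).le
        _ = ((L x).ord).card := (Cardinal.card_ord _).symm
        _ ≤ (sSup a).card := Ordinal.card_le_card (le_csSup habdd hxa)
  have hlower : ∀ η, η < (L α).ord → ∃ β, (β ∈ a ∧ β < μ.ord) ∧ η < (L β).ord := by
    intro η hη
    by_contra hcon
    push_neg at hcon
    apply absurd hη (not_lt.mpr ?_)
    rw [Cardinal.ord_le, hcont]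
    apply ciSup_le
    rintro ⟨β, hβ⟩
    obtain ⟨x, hxS, hβx⟩ := hlub hβ
    have h1 : (L x).ord ≤ η := hcon x ⟨hSa hxS, hSsub hxS⟩
    calc L β ≤ L x := (hL.1 β x hβx (hSsub hxS)).le
      _ ≤ η.card := Cardinal.ord_le.mp h1
  exact ⟨α, ⟨⟨hαμ, hαlim, hcofα⟩, hsupa⟩, fun γ hγ hγμ => hle γ ⟨hγ, hγμ⟩, hlower⟩

end Helpers


theorem stmt7 (κ lam μ : Cardinal.{0}) (hreg : κ.IsRegular) (hunc : ℵ₀ < κ)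
    (hkl : κ < lam) (hμ : μ = lam.ord.cof) (hsing : lam.ord.cof < lam) (hcf : κ ≤ μ)
    (hu : ∀ τ : Cardinal.{0}, μ < τ → τ < lam →
      uCard (Order.succ μ) τ < Cardinal.lift.{1} lam)
    (L : Ordinal.{0} → Cardinal.{0}) (hL : GoodSeq lam μ.ord L)
    (R : Set SOrd) (hRB : R ⊆ Bset κ lam μ.ord L)
    (hRpos : JPos κ lam (NSmu κ lam μ) R) :
    OrdStationary μ.ord
      {α ∈ Eset κ μ.ord |
        uCard (Order.succ μ) (L α) ≤ #(↥(R ∩ Wset κ lam L α))} := by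
  classical
  -- basic cardinal facts
  have hμℵ : ℵ₀ ≤ μ := (lt_of_lt_of_le hunc hcf).le
  have hμlift : (ℵ₀ : Cardinal.{1}) ≤ Cardinal.lift.{1} μ := by
    rw [← Cardinal.lift_aleph0.{1, 0}]
    exact Cardinal.lift_le.mpr hμℵ
  have hregμ : μ.ord.cof = μ := by
    rw [hμ]
    exact Ordinal.cof_cof lam.ord
  have hμopos : (0 : Ordinal) < μ.ord := by
    rw [Cardinal.lt_ord]
    simpa using lt_of_lt_of_le Cardinal.aleph0_pos hμℵ
  haveI hIne : Nonempty (Set.Iio μ.ord) := ⟨⟨0, hμopos⟩⟩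
  have hμolim : Order.IsSuccLimit (μ.ord) := Cardinal.isSuccLimit_ord hμℵ
  have hlamℵ : ℵ₀ ≤ lam := (lt_trans hunc hkl).le
  have hμltlam : μ < lam := hμ ▸ hsing
  have hμordlam : μ.ord < lam.ord := Cardinal.ord_lt_ord.mpr hμltlam
  have bddAboveL : BddAbove (Set.range fun β : Set.Iio μ.ord => L β) :=
    Cardinal.bddAbove_of_small
  have hLle_lam : ∀ β, β < μ.ord → L β ≤ lam := by
    intro β hβ
    rw [hL.2.2.1]
    exact le_ciSup bddAboveL ⟨β, hβ⟩
  have hLlt_lam : ∀ β, β < μ.ord → L β < lam := by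
    intro β hβ
    have hβ1 : β + 1 < μ.ord := by
      rw [Ordinal.add_one_eq_succ]
      exact hμolim.succ_lt hβ
    exact lt_of_lt_of_le (hL.1 β (β + 1) (lt_add_one β) hβ1) (hLle_lam _ hβ1)
  have hμltL : ∀ β, β < μ.ord → μ < L β := by
    intro β hβ
    have h0 : μ < L 0 := by
      have := hL.2.2.2
      rwa [Cardinal.card_ord] at this
    rcases eq_or_lt_of_le (zero_le : (0 : Ordinal) ≤ β) with rfl | hβ0
    · exact h0
    · exact lt_trans h0 (hL.1 0 β hβ0 hβ)
  have hexL : ∀ x : Cardinal.{0}, x < lam → ∃ δ, δ < μ.ord ∧ x < L δ := by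
    intro x hx
    by_contra hcon
    push_neg at hcon
    have : lam ≤ x := by
      rw [hL.2.2.1]
      apply ciSup_le
      rintro ⟨δ, hδ⟩
      exact hcon δ hδ
    exact absurd hx (not_lt.mpr this)
  -- extract an ideal witnessing positivity
  obtain ⟨J, hJi, hJn, hRJ⟩ : ∃ J, IsIdeal κ lam J ∧ MuNormal κ lam μ J ∧ R ∉ J := by
    by_contra hcon
    push_neg at hcon
    exact hRpos.2 (Set.mem_sInter.mpr fun J hJ => hcon J hJ.1 hJ.2)
  constructor
  · rintro α ⟨hαE, -⟩
    exact hαE.1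
  intro C hC
  obtain ⟨γ1, hγ1C, -⟩ := hC.2.1 0 hμopos
  have hγ1μ : γ1 < μ.ord := hC.1 hγ1C
  have hmain : ∃ α, α ∈ Eset κ μ.ord ∧ γ1 ≤ α ∧
      uCard (Order.succ μ) (L α) ≤ #(↥(R ∩ Wset κ lam L α)) := by
    by_contra hconS
    push_neg at hconS
    -- choose cofinal families Y β
    have hYex : ∀ β : Ordinal, ∃ Y : Set SOrd, β < μ.ord →
        Y ⊆ Pkl (Order.succ μ) (L β) ∧
        (∀ z ∈ Pkl (Order.succ μ) (L β), ∃ x ∈ Y, z ⊆ x) ∧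
        #Y = uCard (Order.succ μ) (L β) := by
      intro β
      have hne : {c | ∃ X ⊆ Pkl (Order.succ μ) (L β), #X = c ∧
          ∀ z ∈ Pkl (Order.succ μ) (L β), ∃ x ∈ X, z ⊆ x}.Nonempty :=
        ⟨_, Pkl (Order.succ μ) (L β), Set.Subset.rfl, rfl, fun z hz => ⟨z, hz, Set.Subset.rfl⟩⟩
      obtain ⟨X, hX1, hX2, hX3⟩ := csInf_mem hne
      exact ⟨X, fun _ => ⟨hX1, hX3, hX2⟩⟩
    choose Y hY using hYex
    -- downgrades of the cardinalities
    have hu0ex : ∀ β : Ordinal, ∃ u0 : Cardinal.{0}, β < μ.ord →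
        Cardinal.lift.{1} u0 = #(Y β) ∧ u0 < lam := by
      intro β
      by_cases hβ : β < μ.ord
      · have h1 : #(Y β) < Cardinal.lift.{1} lam := by
          rw [(hY β hβ).2.2]
          exact hu (L β) (hμltL β hβ) (hLlt_lam β hβ)
        obtain ⟨u0, hu0⟩ := Cardinal.mem_range_lift_of_le h1.le
        refine ⟨u0, fun _ => ⟨hu0, ?_⟩⟩
        rw [← Cardinal.lift_lt.{0,1}, hu0]
        exact h1
      · exact ⟨0, fun h => absurd h hβ⟩
    choose u0 hu0 using hu0ex
    have hdex : ∀ β : Ordinal, ∃ δ : Ordinal, β < μ.ord →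
        δ < μ.ord ∧ L β < L δ ∧ u0 β < L δ := by
      intro β
      by_cases hβ : β < μ.ord
      · obtain ⟨δ, hδ1, hδ2⟩ := hexL (max (L β) (u0 β)) (max_lt (hLlt_lam β hβ) (hu0 β hβ).2)
        exact ⟨δ, fun _ => ⟨hδ1, lt_of_le_of_lt (le_max_left _ _) hδ2,
          lt_of_le_of_lt (le_max_right _ _) hδ2⟩⟩
      · exact ⟨0, fun h => absurd h hβ⟩
    choose d hd using hdex
    have hgex : ∀ β : Ordinal, ∃ g : SOrd → Ordinal.{0}, β < μ.ord →
        Set.InjOn g (Y β) ∧ ∀ y ∈ Y β, g y < (u0 β).ord := by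
      intro β
      by_cases hβ : β < μ.ord
      · have hmk : #(Y β) = #(Set.Iio (u0 β).ord) := by
          rw [Ordinal.mk_Iio_ordinal, Cardinal.card_ord]
          exact (hu0 β hβ).1.symm
        obtain ⟨e⟩ := Cardinal.eq.mp hmk
        refine ⟨fun y => if h : y ∈ Y β then (e ⟨y, h⟩ : Set.Iio (u0 β).ord).1 else 0,
          fun _ => ⟨?_, ?_⟩⟩
        · intro y1 h1 y2 h2 heq
          simp only [dif_pos h1, dif_pos h2] at heq
          have h3 := e.injective (Subtype.ext heq)
          exact congrArg Subtype.val h3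
        · intro y hy
          simp only [dif_pos hy]
          exact (e ⟨y, hy⟩).2
      · exact ⟨fun _ => 0, fun h => absurd h hβ⟩
    choose g hg using hgex
    -- the coding function
    set cf : Ordinal → SOrd → Ordinal := fun β y => (L (d β)).ord + g β y with hcf_def
    have hclt : ∀ β, β < μ.ord → ∀ y ∈ Y β, cf β y < lam.ord := by
      intro β hβ y hy
      rw [Cardinal.lt_ord, Ordinal.card_add, Cardinal.card_ord]
      apply Cardinal.add_lt_of_lt hlamℵ (hLlt_lam _ (hd β hβ).1)
      calc (g β y).card ≤ ((u0 β).ord).card := Ordinal.card_le_card ((hg β hβ).2 y hy).le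
        _ = u0 β := Cardinal.card_ord _
        _ < lam := (hu0 β hβ).2
    have hcge : ∀ β y, (L (d β)).ord ≤ cf β y := fun β y => le_self_add
    set F : SOrd → SOrd := fun a => ⋃₀ {y | ∃ β, β < μ.ord ∧ y ∈ Y β ∧ cf β y ∈ a} with hF
    -- F a is small and bounded on each slice
    have hFmem : ∀ (α : Ordinal) (a : SOrd), a ∈ Bset κ lam μ.ord L →
        sSup a = (L α).ord → F a ∈ Pkl (Order.succ μ) (L α) := by
      intro α a haB hsupa
      obtain ⟨haP, h0, hsucc, hinit, hiffL, hbound⟩ := haB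
      have habdd : BddAbove a := ⟨lam.ord, fun x hx => (haP.1 x hx).le⟩
      have halt : ∀ γ ∈ a, γ < (L α).ord := by
        intro γ hγ
        obtain ⟨β, hβa, hβμ, hγβ⟩ := hbound γ hγ
        have hLa : (L β).ord ∈ a := (hiffL β hβμ).mp hβa
        exact lt_of_lt_of_le hγβ (hsupa ▸ le_csSup habdd hLa)
      constructor
      · intro x hx
        obtain ⟨y, ⟨β, hβμ, hyY, hca⟩, hxy⟩ := hx
        have h1 : (L (d β)).ord < (L α).ord := lt_of_le_of_lt (hcge β y) (halt _ hca)
        have h2 : (L β).ord < (L α).ord :=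
          lt_trans (Cardinal.ord_lt_ord.mpr (hd β hβμ).2.1) h1
        exact lt_trans (((hY β hβμ).1 hyY).1 x hxy) h2
      · have hset : {y | ∃ β, β < μ.ord ∧ y ∈ Y β ∧ cf β y ∈ a} =
            ⋃ β ∈ Set.Iio μ.ord, {y | y ∈ Y β ∧ cf β y ∈ a} := by
          ext y
          simp only [Set.mem_setOf_eq, Set.mem_iUnion, Set.mem_Iio, exists_prop]
        have hcard1 : #{y | ∃ β, β < μ.ord ∧ y ∈ Y β ∧ cf β y ∈ a} ≤ Cardinal.lift.{1} μ := by
          rw [hset]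
          refine le_trans (Cardinal.mk_biUnion_le _ _) ?_
          have h1 : #(Set.Iio μ.ord) = Cardinal.lift.{1} μ := by
            rw [Ordinal.mk_Iio_ordinal, Cardinal.card_ord]
          refine le_trans (mul_le_mul' h1.le ?_) (Cardinal.mul_eq_self hμlift).le
          apply ciSup_le'
          rintro ⟨β, hβ⟩
          have hinj : Set.InjOn (cf β) {y | y ∈ Y β ∧ cf β y ∈ a} := by
            intro y1 h1' y2 h2' heq
            apply (hg β hβ).1 h1'.1 h2'.1
            have heq2 : (L (d β)).ord + g β y1 = (L (d β)).ord + g β y2 := heq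
            exact add_left_cancel_iff.mp heq2
          have himg : #{y | y ∈ Y β ∧ cf β y ∈ a} =
              #(cf β '' {y | y ∈ Y β ∧ cf β y ∈ a}) :=
            (Cardinal.mk_image_eq_of_injOn _ _ hinj).symm
          have hsub2 : cf β '' {y | y ∈ Y β ∧ cf β y ∈ a} ⊆ a := by
            rintro x ⟨y, hy, rfl⟩
            exact hy.2
          calc #{y | y ∈ Y β ∧ cf β y ∈ a}
              = #(cf β '' {y | y ∈ Y β ∧ cf β y ∈ a}) := himg
            _ ≤ #a := Cardinal.mk_le_mk_of_subset hsub2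
            _ ≤ Cardinal.lift.{1} μ := (lt_of_lt_of_le haP.2 (Cardinal.lift_le.mpr hcf)).le
        have hsUn : #(F a) ≤ Cardinal.lift.{1} μ := by
          refine le_trans (Cardinal.mk_sUnion_le _) ?_
          refine le_trans (mul_le_mul' hcard1 ?_) (Cardinal.mul_eq_self hμlift).le
          apply ciSup_le'
          rintro ⟨y, β, hβ, hyY, -⟩
          have h2 := ((hY β hβ).1 hyY).2
          rw [Cardinal.lift_succ] at h2
          exact Order.le_of_lt_succ h2
        rw [Cardinal.lift_succ]
        exact Order.lt_succ_iff.mpr hsUn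
    -- choose the non-cofinality witnesses
    have he'ex : ∀ α : Ordinal, ∃ e' : SOrd,
        (α < μ.ord → e' ∈ Pkl (Order.succ μ) (L α)) ∧
        (α ∈ Eset κ μ.ord → γ1 ≤ α → ∀ a, a ∈ R → a ∈ Wset κ lam L α → ¬ e' ⊆ F a) := by
      intro α
      by_cases hα : α ∈ Eset κ μ.ord ∧ γ1 ≤ α
      · have hnotcof : ¬ ∀ z ∈ Pkl (Order.succ μ) (L α),
            ∃ x ∈ F '' (R ∩ Wset κ lam L α), z ⊆ x := by
          intro hcof
          have hXsub : F '' (R ∩ Wset κ lam L α) ⊆ Pkl (Order.succ μ) (L α) := by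
            rintro x ⟨a, ⟨haR, haW⟩, rfl⟩
            exact hFmem α a (hRB haR) haW.2
          have hmem : #(F '' (R ∩ Wset κ lam L α)) ∈
              {c | ∃ X ⊆ Pkl (Order.succ μ) (L α), #X = c ∧
                ∀ z ∈ Pkl (Order.succ μ) (L α), ∃ x ∈ X, z ⊆ x} :=
            ⟨_, hXsub, rfl, hcof⟩
          have h2 := csInf_le (OrderBot.bddBelow _) hmem
          exact absurd (le_trans h2 Cardinal.mk_image_le)
            (not_le.mpr (hconS α hα.1 hα.2))
        push_neg at hnotcof
        obtain ⟨z, hz1, hz2⟩ := hnotcof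
        exact ⟨z, fun _ => hz1, fun _ _ a haR haW hsub =>
          hz2 (F a) ⟨a, ⟨haR, haW⟩, rfl⟩ hsub⟩
      · refine ⟨∅, fun _ => ⟨fun x hx => absurd hx (Set.notMem_empty x), ?_⟩,
          fun h1 h2 => absurd ⟨h1, h2⟩ hα⟩
        rw [Cardinal.mk_emptyCollection]
        refine lt_of_lt_of_le Cardinal.aleph0_pos ?_
        rw [Cardinal.lift_succ]
        exact le_trans hμlift (Order.le_succ _)
    choose e' he' using he'ex
    -- the union traces and their covers
    set U : Ordinal → SOrd := fun β => {x | x < (L β).ord ∧ ∃ α, α < μ.ord ∧ x ∈ e' α} with hU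
    have hUmem : ∀ β, β < μ.ord → U β ∈ Pkl (Order.succ μ) (L β) := by
      intro β hβ
      constructor
      · exact fun x hx => hx.1
      · have hsub : U β ⊆ ⋃ α ∈ Set.Iio μ.ord, e' α := by
          rintro x ⟨-, α, hα, hx⟩
          exact Set.mem_biUnion hα hx
        have h3 : #(⋃ α ∈ Set.Iio μ.ord, e' α) ≤ Cardinal.lift.{1} μ := by
          refine le_trans (Cardinal.mk_biUnion_le _ _) ?_
          refine le_trans (mul_le_mul' ?_ ?_) (Cardinal.mul_eq_self hμlift).le
          · rw [Ordinal.mk_Iio_ordinal, Cardinal.card_ord]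
          · apply ciSup_le'
            rintro ⟨α, hα⟩
            have h2 := ((he' α).1 hα).2
            rw [Cardinal.lift_succ] at h2
            exact Order.le_of_lt_succ h2
        refine lt_of_le_of_lt (le_trans (Cardinal.mk_le_mk_of_subset hsub) h3) ?_
        rw [Cardinal.lift_succ]
        exact Order.lt_succ_of_le le_rfl
    have hwex : ∀ β, ∃ w : SOrd, β < μ.ord → w ∈ Y β ∧ U β ⊆ w := by
      intro β
      by_cases hβ : β < μ.ord
      · obtain ⟨w, hw1, hw2⟩ := (hY β hβ).2.1 (U β) (hUmem β hβ)
        exact ⟨w, fun _ => ⟨hw1, hw2⟩⟩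
      · exact ⟨∅, fun h => absurd h hβ⟩
    choose w hw using hwex
    set δf : Ordinal → Ordinal := fun β => cf β (w β) with hδf
    have hδflt : ∀ β, β < μ.ord → δf β < lam.ord := fun β hβ => hclt β hβ _ (hw β hβ).1
    have hBad : {a ∈ Pkl κ lam | ∃ β, β ∈ a ∧ β < μ.ord ∧ δf β ∉ a} ∈ J :=
      bad_mem hunc hJi hJn δf hδflt
    have hBad2 : {a ∈ Pkl κ lam | γ1 ∉ a} ∈ J :=
      hJi.noncof (notMem_noncof hunc (lt_trans hγ1μ hμordlam))
    have hA0 : ∃ a, a ∈ R ∧ (∀ β, β ∈ a → β < μ.ord → δf β ∈ a) ∧ γ1 ∈ a := by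
      by_contra hA
      push_neg at hA
      apply hRJ
      apply hJi.mono _ (union2_mem hunc hJi hBad hBad2) R
      intro a haR
      by_cases h1 : ∃ β, β ∈ a ∧ β < μ.ord ∧ δf β ∉ a
      · exact Or.inl ⟨hRpos.1 haR, h1⟩
      · push_neg at h1
        exact Or.inr ⟨hRpos.1 haR, hA a haR h1⟩
    obtain ⟨a, haR, hdiag, hγ1a⟩ := hA0
    obtain ⟨α, ⟨hαE, hsupa⟩, hmax, hlower⟩ := bset_struct hunc hcf hregμ hμℵ hL (hRB haR)
    have hγ1α : γ1 ≤ α := hmax γ1 hγ1a hγ1μ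
    have haW : a ∈ Wset κ lam L α := ⟨hRpos.1 haR, hsupa⟩
    have hfail : ¬ e' α ⊆ F a := (he' α).2 hαE hγ1α a haR haW
    apply hfail
    intro η hη
    have hηα : η < (L α).ord := ((he' α).1 hαE.1).1 η hη
    obtain ⟨β, ⟨hβa, hβμ⟩, hηβ⟩ := hlower η hηα
    have hδa : δf β ∈ a := hdiag β hβa hβμ
    have hwF : w β ⊆ F a := Set.subset_sUnion_of_mem ⟨β, hβμ, (hw β hβμ).1, hδa⟩
    exact hwF ((hw β hβμ).2 ⟨hηβ, α, hαE.1, hη⟩)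
  obtain ⟨α, hαE, hγα, huν⟩ := hmain
  exact ⟨α, ⟨hαE, huν⟩, club_tail hC hγ1C α hαE.1 hγα⟩


end
end

section
/- Let κ be a regular uncountable cardinal, λ ≥ κ, and suppose the nonstationary ideal NS_{κ,λ} equals I_{κ,λ} | A for some A. Then every stationary subset of P_κ(λ) can be split into u(κ,λ) pairwise disjoint stationary sets, where u(κ,λ) is the least cardinality of a cofinal subset of P_κ(λ). -/
open Cardinal Set

noncomputable section

/-- Auxiliary: choose injectively from a family of sets, each of which meets the
complement of any set of size at most that of an initial segment. -/
lemma exists_inj_choice {α β : Type u} [LinearOrder α] [WellFoundedLT α]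
    (T : α → Set β)
    (h : ∀ (x : α) (E : Set β), #E ≤ #(Set.Iio x) → (T x \ E).Nonempty) :
    ∃ F : α → β, (∀ x, F x ∈ T x) ∧ Function.Injective F := by
  let F : α → β := WellFoundedLT.fix fun y ih =>
    (h y (Set.range fun z : Set.Iio y => ih z z.2) Cardinal.mk_range_le).some
  have hF : ∀ x : α, F x ∈ T x \ (Set.range fun z : Set.Iio x => F z) := by
    intro x
    have hx := WellFoundedLT.fix_eq (fun y ih =>
      (h y (Set.range fun z : Set.Iio y => ih z z.2) Cardinal.mk_range_le).some) x
    have hx' : F x =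
        (h x (Set.range fun z : Set.Iio x => F z) Cardinal.mk_range_le).some := hx
    rw [hx']
    exact Set.Nonempty.some_mem _
  refine ⟨F, fun x => (hF x).1, ?_⟩
  intro x y hxy
  by_contra hne
  rcases Ne.lt_or_gt hne with h1 | h1
  · exact (hF y).2 ⟨⟨x, h1⟩, hxy⟩
  · exact (hF x).2 ⟨⟨y, h1⟩, hxy.symm⟩

theorem stmt15 (κ lam : Cardinal.{0}) (hreg : κ.IsRegular) (hunc : ℵ₀ < κ)
    (hlam : κ ≤ lam) (A : Set SOrd)
    (hApos : JPos κ lam (noncofinalIdeal κ lam) A)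
    (hNS : NSkl κ lam = restr κ lam (noncofinalIdeal κ lam) A) :
    ∀ S : Set SOrd, StatPkl κ lam S →
      ∃ P : Set (Set SOrd), (∀ p ∈ P, p ⊆ S ∧ StatPkl κ lam p) ∧
        (∀ p ∈ P, ∀ q ∈ P, p ≠ q → p ∩ q = ∅) ∧ ⋃₀ P = S ∧
        #P = uCard κ lam := by
  classical
  intro S hS
  obtain ⟨hSsub, hSstat⟩ := hS
  have hkl : ℵ₀ ≤ κ := hreg.1
  have hlift : ℵ₀ ≤ Cardinal.lift.{1} κ := by simpa using hkl
  -- basic facts about Pkl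
  have hunion : ∀ b ∈ Pkl κ lam, ∀ c ∈ Pkl κ lam, b ∪ c ∈ Pkl κ lam := by
    intro b hb c hc
    refine ⟨fun x hx => hx.elim (hb.1 x) (hc.1 x), ?_⟩
    exact (Cardinal.mk_union_le b c).trans_lt (Cardinal.add_lt_of_lt hlift hb.2 hc.2)
  have hsingle : ∀ ξ < lam.ord, ({ξ} : SOrd) ∈ Pkl κ lam := by
    intro ξ hξ
    refine ⟨fun x hx => by rwa [Set.mem_singleton_iff.mp hx], ?_⟩
    rw [Cardinal.mk_singleton]
    exact lt_of_lt_of_le Cardinal.one_lt_aleph0 hlift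
  -- S ∩ A is cofinal in P_κ(λ)
  have hSA_notJ : S ∩ A ∉ noncofinalIdeal κ lam := by
    intro h
    have hmem : S ∈ NSkl κ lam := by
      rw [hNS]; exact ⟨hSsub, h⟩
    obtain ⟨-, C, hC, hSC⟩ := hmem
    exact (hSstat C hC).ne_empty hSC
  have hTcof : ∀ b ∈ Pkl κ lam, ∃ a, a ∈ S ∩ A ∧ b ⊆ a := by
    intro b hb
    by_contra h
    push_neg at h
    exact hSA_notJ ⟨Set.inter_subset_left.trans hSsub, b, hb, fun a ha hba => h a ha hba⟩
  -- a sufficient criterion for stationarity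
  have hstat : ∀ p : Set SOrd, p ⊆ Pkl κ lam →
      (∀ b ∈ Pkl κ lam, ∃ a, a ∈ p ∩ A ∧ b ⊆ a) → StatPkl κ lam p := by
    intro p hp hpcof
    refine ⟨hp, fun C hC => ?_⟩
    by_contra hne
    rw [Set.not_nonempty_iff_eq_empty] at hne
    have hmem : p ∈ NSkl κ lam := ⟨hp, C, hC, hne⟩
    rw [hNS] at hmem
    obtain ⟨-, b, hb, hball⟩ := hmem.2
    obtain ⟨a, ha, hba⟩ := hpcof b hb
    exact hball a ha hba
  -- facts about uCard
  have huSne : {c : Cardinal.{1} |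
      ∃ X ⊆ Pkl κ lam, #X = c ∧ ∀ a ∈ Pkl κ lam, ∃ x ∈ X, a ⊆ x}.Nonempty :=
    ⟨#(Pkl κ lam), Pkl κ lam, subset_rfl, rfl, fun a ha => ⟨a, ha, subset_rfl⟩⟩
  obtain ⟨X₀, hX₀sub, hX₀card, hX₀cof⟩ :
      ∃ X ⊆ Pkl κ lam, #X = uCard κ lam ∧ ∀ a ∈ Pkl κ lam, ∃ x ∈ X, a ⊆ x :=
    csInf_mem huSne
  have hinf : ∀ c ∈ {c : Cardinal.{1} |
      ∃ X ⊆ Pkl κ lam, #X = c ∧ ∀ a ∈ Pkl κ lam, ∃ x ∈ X, a ⊆ x}, ℵ₀ ≤ c := by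
    rintro c ⟨X, hXsub, rfl, hXcof⟩
    by_contra hc
    push_neg at hc
    have hXfin : X.Finite := by rwa [Cardinal.lt_aleph0_iff_set_finite] at hc
    have hcover : Set.Iio lam.ord ⊆ ⋃₀ X := by
      intro ξ hξ
      obtain ⟨x, hx, hsx⟩ := hXcof {ξ} (hsingle ξ hξ)
      exact ⟨x, hx, hsx rfl⟩
    have hUB : ∀ Y : Set SOrd, Y.Finite → Y ⊆ Pkl κ lam →
        #(⋃₀ Y) < Cardinal.lift.{1} κ := by
      intro Y hY
      refine Set.Finite.induction_on
        (motive := fun Y _ => Y ⊆ Pkl κ lam → #(⋃₀ Y) < Cardinal.lift.{1} κ) Y hY ?_ ?_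
      · intro _
        rw [Set.sUnion_empty]
        simpa using lt_of_lt_of_le Cardinal.aleph0_pos hlift
      · intro a s ha hs ih hsub
        rw [Set.sUnion_insert]
        have h1 := hsub (Set.mem_insert _ _)
        have h2 := ih (fun y hy => hsub (Set.mem_insert_of_mem _ hy))
        exact (Cardinal.mk_union_le _ _).trans_lt (Cardinal.add_lt_of_lt hlift h1.2 h2)
    have hlow : Cardinal.lift.{1} lam ≤ #(⋃₀ X) := by
      calc Cardinal.lift.{1} lam = #(Set.Iio lam.ord) := by
            rw [Ordinal.mk_Iio_ordinal, Cardinal.card_ord]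
        _ ≤ #(⋃₀ X) := Cardinal.mk_le_mk_of_subset hcover
    have hkll : Cardinal.lift.{1} κ ≤ Cardinal.lift.{1} lam :=
      Cardinal.lift_le.mpr hlam
    exact absurd (hlow.trans_lt (hUB X hXfin hXsub)) hkll.not_gt
  have hu_inf : ℵ₀ ≤ uCard κ lam := le_csInf huSne hinf
  -- upper cones in S ∩ A have size at least uCard
  have hconeu : ∀ b ∈ Pkl κ lam,
      uCard κ lam ≤ #({t | t ∈ S ∩ A ∧ b ⊆ t} : Set SOrd) := by
    intro b hb
    refine csInf_le (OrderBot.bddBelow _) ⟨{t | t ∈ S ∩ A ∧ b ⊆ t}, ?_, rfl, ?_⟩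
    · intro u hu; exact hSsub hu.1.1
    · intro a ha
      obtain ⟨v, hv, hsub'⟩ := hTcof (a ∪ b) (hunion a ha b hb)
      exact ⟨v, ⟨hv, Set.subset_union_right.trans hsub'⟩,
        Set.subset_union_left.trans hsub'⟩
  -- the construction
  have hγcard : #((uCard κ lam).ord.ToType) = uCard κ lam := Cardinal.mk_ord_toType _
  have hmul : #((uCard κ lam).ord.ToType) = #(↥X₀ × ↥X₀) := by
    rw [Cardinal.mk_prod, hX₀card, Cardinal.lift_id, Cardinal.mul_eq_self hu_inf, hγcard]
  obtain ⟨e⟩ : Nonempty ((uCard κ lam).ord.ToType ≃ ↥X₀ × ↥X₀) := Cardinal.eq.mp hmul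
  have hX₀Pkl : ∀ j : ↥X₀, (j : SOrd) ∈ Pkl κ lam := fun j => hX₀sub j.2
  obtain ⟨F, hFmem, hFinj⟩ :=
    exists_inj_choice (fun x : (uCard κ lam).ord.ToType =>
        ({t | t ∈ S ∩ A ∧ ((e x).2 : SOrd) ⊆ t} : Set SOrd))
      (fun x E hE => by
        rw [Set.diff_nonempty]
        intro hsub'
        have h1 : uCard κ lam ≤ #E :=
          (hconeu _ (hX₀Pkl (e x).2)).trans (Cardinal.mk_le_mk_of_subset hsub')
        have h2 : #E < uCard κ lam := hE.trans_lt (Cardinal.mk_Iio_ord_toType x)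
        exact absurd h1 h2.not_ge)
  set t : ↥X₀ × ↥X₀ → SOrd := fun p => F (e.symm p) with ht_def
  have htinj : Function.Injective t := fun p q h => by
    have := hFinj h
    exact e.symm.injective this
  have htmem : ∀ p : ↥X₀ × ↥X₀, t p ∈ S ∩ A ∧ ((p.2 : SOrd)) ⊆ t p := by
    intro p
    have h := hFmem (e.symm p)
    rwa [Equiv.apply_symm_apply] at h
  have hX₀ne : Nonempty ↥X₀ := by
    rw [← Cardinal.mk_ne_zero_iff, hX₀card]
    exact ne_of_gt (lt_of_lt_of_le Cardinal.aleph0_pos hu_inf)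
  obtain ⟨j₀⟩ := hX₀ne
  set R : ↥X₀ → Set SOrd := fun j => Set.range fun b : ↥X₀ => t (j, b) with hR_def
  have hRsub : ∀ j, R j ⊆ S ∩ A := by
    rintro j a ⟨b, rfl⟩
    exact (htmem (j, b)).1
  have hRdisj : ∀ j j' : ↥X₀, j ≠ j' → R j ∩ R j' = ∅ := by
    intro j j' hjj
    ext a
    simp only [Set.mem_inter_iff, Set.mem_empty_iff_false, iff_false, not_and]
    rintro ⟨b, rfl⟩ ⟨b', hb'⟩
    have h2 := htinj hb'
    rw [Prod.mk.injEq] at h2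
    exact hjj h2.1.symm
  have hRcof : ∀ j : ↥X₀, ∀ b' ∈ Pkl κ lam, ∃ a, a ∈ R j ∩ A ∧ b' ⊆ a := by
    intro j b' hb'
    obtain ⟨x, hx, hbx⟩ := hX₀cof b' hb'
    exact ⟨t (j, ⟨x, hx⟩), ⟨⟨⟨x, hx⟩, rfl⟩, (htmem (j, ⟨x, hx⟩)).1.2⟩,
      hbx.trans (htmem (j, ⟨x, hx⟩)).2⟩
  set piece : ↥X₀ → Set SOrd := fun j =>
    if j = j₀ then S \ ⋃ (j' : ↥X₀) (_ : j' ≠ j₀), R j' else R j with hpiece_def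
  have hp1 : piece j₀ = S \ ⋃ (j' : ↥X₀) (_ : j' ≠ j₀), R j' := if_pos rfl
  have hp2 : ∀ j : ↥X₀, j ≠ j₀ → piece j = R j := fun j h => if_neg h
  have hpiece_sub : ∀ j, piece j ⊆ S := by
    intro j
    by_cases h : j = j₀
    · subst h
      rw [hp1]
      exact Set.diff_subset
    · rw [hp2 j h]
      exact (hRsub j).trans Set.inter_subset_left
  have hRj0_sub : R j₀ ⊆ piece j₀ := by
    rw [hp1]
    intro a ha
    refine ⟨(hRsub j₀ ha).1, ?_⟩
    intro hmem
    rw [Set.mem_iUnion] at hmem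
    obtain ⟨j', hmem⟩ := hmem
    rw [Set.mem_iUnion] at hmem
    obtain ⟨hj', ha'⟩ := hmem
    have hd : a ∈ R j' ∩ R j₀ := ⟨ha', ha⟩
    rw [hRdisj j' j₀ hj'] at hd
    exact hd
  have hpdisj : ∀ j j' : ↥X₀, j ≠ j' → piece j ∩ piece j' = ∅ := by
    intro j j' hjj
    by_cases h : j = j₀
    · subst h
      rw [hp1, hp2 j' (Ne.symm hjj)]
      ext a
      simp only [Set.mem_inter_iff, Set.mem_empty_iff_false, iff_false, not_and]
      rintro ⟨-, hnot⟩ haR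
      exact hnot (Set.mem_iUnion.mpr ⟨j', Set.mem_iUnion.mpr ⟨Ne.symm hjj, haR⟩⟩)
    · by_cases h' : j' = j₀
      · subst h'
        rw [hp2 j h, hp1]
        ext a
        simp only [Set.mem_inter_iff, Set.mem_empty_iff_false, iff_false, not_and]
        rintro haR ⟨-, hnot⟩
        exact hnot (Set.mem_iUnion.mpr ⟨j, Set.mem_iUnion.mpr ⟨h, haR⟩⟩)
      · rw [hp2 j h, hp2 j' h']
        exact hRdisj j j' hjj
  have hpne : ∀ j, (piece j).Nonempty := by
    intro j
    by_cases h : j = j₀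
    · rw [h]
      exact ⟨t (j₀, j₀), hRj0_sub ⟨j₀, rfl⟩⟩
    · exact ⟨t (j, j₀), by rw [hp2 j h]; exact ⟨j₀, rfl⟩⟩
  refine ⟨Set.range piece, ?_, ?_, ?_, ?_⟩
  · rintro p ⟨j, rfl⟩
    refine ⟨hpiece_sub j, hstat _ ((hpiece_sub j).trans hSsub) ?_⟩
    intro b hb
    obtain ⟨a, ⟨haR, haA⟩, hba⟩ := hRcof j b hb
    by_cases h : j = j₀
    · subst h
      exact ⟨a, ⟨hRj0_sub haR, haA⟩, hba⟩
    · rw [hp2 j h]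
      exact ⟨a, ⟨haR, haA⟩, hba⟩
  · rintro p ⟨j, rfl⟩ q ⟨j', rfl⟩ hpq
    exact hpdisj j j' (fun h => hpq (by rw [h]))
  · refine subset_antisymm (Set.sUnion_subset ?_) ?_
    · rintro p ⟨j, rfl⟩
      exact hpiece_sub j
    · intro s hs
      by_cases hsR : ∃ j' : ↥X₀, j' ≠ j₀ ∧ s ∈ R j'
      · obtain ⟨j', hj', hsR⟩ := hsR
        exact ⟨piece j', ⟨j', rfl⟩, by rw [hp2 j' hj']; exact hsR⟩
      · push_neg at hsR
        refine ⟨piece j₀, ⟨j₀, rfl⟩, ?_⟩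
        rw [hp1]
        refine ⟨hs, ?_⟩
        intro hmem
        rw [Set.mem_iUnion] at hmem
        obtain ⟨j', hmem⟩ := hmem
        rw [Set.mem_iUnion] at hmem
        obtain ⟨hj', hmem⟩ := hmem
        exact hsR j' hj' hmem
  · have hpinj : Function.Injective piece := by
      intro j j' h
      by_contra hne
      obtain ⟨a, ha⟩ := hpne j
      have hd : a ∈ piece j ∩ piece j' := ⟨ha, h ▸ ha⟩
      rw [hpdisj j j' hne] at hd
      exact hd
    rw [Cardinal.mk_range_eq piece hpinj, hX₀card]

end
end

section
/- Let κ be a regular uncountable cardinal, λ ≥ κ, and μ, θ cardinals with 1 ≤ μ ≤ λ and 2 ≤ θ ≤ ω. Then the smallest [μ]^{<θ}-normal ideal on P_κ(λ) equals the smallest μ-normal ideal NS^μ_{κ,λ}. -/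
open Cardinal Set

noncomputable section

lemma aux_pkl_empty (κ lam : Cardinal.{0}) (hκ : 0 < κ) : (∅ : SOrd) ∈ Pkl κ lam := by
  refine ⟨by simp, ?_⟩
  simpa using Cardinal.lift_lt.{0,1}.mpr hκ

lemma aux_empty_mem {κ lam : Cardinal.{0}} {J : Set (Set SOrd)} (hJ : IsIdeal κ lam J)
    (hκ : 0 < κ) : (∅ : Set SOrd) ∈ J :=
  hJ.noncof ⟨empty_subset _, ∅, aux_pkl_empty κ lam hκ, by simp⟩

lemma aux_pos_nonempty {κ lam : Cardinal.{0}} {J : Set (Set SOrd)} {A : Set SOrd}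
    (hJ : IsIdeal κ lam J) (hκ : 0 < κ) (hA : JPos κ lam J A) : A.Nonempty := by
  rcases A.eq_empty_or_nonempty with h | h
  · exact absurd (h ▸ aux_empty_mem hJ hκ) hA.2
  · exact h

lemma aux_union_mem {κ lam : Cardinal.{0}} {J : Set (Set SOrd)} (hJ : IsIdeal κ lam J)
    (hκ : ℵ₀ ≤ κ) {A B : Set SOrd} (hA : A ∈ J) (hB : B ∈ J) : A ∪ B ∈ J := by
  have heq : A ∪ B = ⋃₀ {A, B} := by simp
  rw [heq]
  apply hJ.unionlt
  · intro X hX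
    rcases hX with rfl | rfl
    · exact hA
    · exact hB
  · refine lt_of_lt_of_le ?_ (Cardinal.aleph0_le_lift.mpr hκ)
    exact ((Set.finite_singleton B).insert A).lt_aleph0

lemma aux_pos_diff {κ lam : Cardinal.{0}} {J : Set (Set SOrd)} {A A₀ : Set SOrd}
    (hJ : IsIdeal κ lam J) (hκ : ℵ₀ ≤ κ)
    (hA : JPos κ lam J A) (h0 : A₀ ∈ J) : JPos κ lam J (A \ A₀) := by
  refine ⟨(diff_subset).trans hA.1, fun hmem => hA.2 ?_⟩
  have hsub : A ⊆ (A \ A₀) ∪ A₀ := by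
    intro a ha; by_cases h : a ∈ A₀ <;> simp [*]
  exact hJ.mono _ (aux_union_mem hJ hκ hmem h0) A hsub

lemma aux_seq_to_mu {κ lam μ θ : Cardinal.{0}} {J : Set (Set SOrd)}
    (hreg : κ.IsRegular) (hunc : ℵ₀ < κ) (hlam : κ ≤ lam) (hθ2 : 2 ≤ θ)
    (hJ : IsIdeal κ lam J) (hS : SeqNormal κ lam μ θ J) : MuNormal κ lam μ J := by
  intro A hA f hf
  set A' : Set SOrd := {a ∈ A | (0 : Ordinal) ∈ a ∧ (1 : Ordinal) ∈ a} with hA'def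
  have hωlam : (Ordinal.omega0 : Ordinal) ≤ lam.ord := by
    have := Cardinal.ord_le_ord.mpr (hreg.aleph0_le.trans hlam)
    simpa [Cardinal.ord_aleph0] using this
  have hb : ({0, 1} : SOrd) ∈ Pkl κ lam := by
    constructor
    · intro x hx
      rcases hx with rfl | hx
      · exact lt_of_lt_of_le Ordinal.omega0_pos hωlam
      · simp only [mem_singleton_iff] at hx
        subst hx
        exact lt_of_lt_of_le Ordinal.one_lt_omega0 hωlam
    · refine lt_of_lt_of_le ?_ (Cardinal.aleph0_le_lift.mpr hreg.aleph0_le)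
      exact ((Set.finite_singleton (1:Ordinal)).insert 0).lt_aleph0
  have hdiff : A \ A' ∈ J := by
    apply hJ.noncof
    refine ⟨(diff_subset).trans hA.1, {0, 1}, hb, ?_⟩
    rintro a ⟨haA, haA'⟩ hba
    exact haA' ⟨haA, hba (by simp), hba (by simp)⟩
  have hA'pos : JPos κ lam J A' := by
    have h1 : A' ⊆ A := sep_subset _ _
    have := aux_pos_diff hJ hreg.aleph0_le hA hdiff
    rwa [Set.diff_diff_cancel_left h1] at this
  have hθord : (2 : Ordinal) ≤ θ.ord := by
    have : ((2 : ℕ) : Cardinal).ord ≤ θ.ord := Cardinal.ord_le_ord.mpr (by simpa using hθ2)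
    simpa using this
  have hyp : ∀ a ∈ A', (fun a => ({f a} : SOrd)) a ⊆ a ∩ Set.Iio μ.ord ∧
      #((fun a => ({f a} : SOrd)) a) < Cardinal.lift.{1} θ ∧
      #((fun a => ({f a} : SOrd)) a) < #(↥(a ∩ Set.Iio θ.ord)) := by
    intro a ha
    obtain ⟨haA, h0a, h1a⟩ := ha
    obtain ⟨hfa, hflt⟩ := hf a haA
    refine ⟨by simp [hfa, hflt], ?_, ?_⟩
    · rw [Cardinal.mk_singleton]
      calc (1 : Cardinal.{1}) < 2 := one_lt_two
        _ = Cardinal.lift.{1} 2 := by simp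
        _ ≤ Cardinal.lift.{1} θ := Cardinal.lift_le.mpr hθ2
    · rw [Cardinal.mk_singleton]
      rw [Cardinal.one_lt_iff_nontrivial]
      rw [Set.nontrivial_coe_sort]
      refine ⟨0, ⟨h0a, ?_⟩, 1, ⟨h1a, ?_⟩, by simp⟩
      · exact mem_Iio.mpr (lt_of_lt_of_le (show (0:Ordinal) < 2 by norm_num) hθord)
      · exact mem_Iio.mpr (lt_of_lt_of_le (show (1:Ordinal) < 2 by norm_num) hθord)
  obtain ⟨B, hBpos, hBA', c, hc⟩ := hS A' hA'pos (fun a => {f a}) hyp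
  obtain ⟨a₀, ha₀⟩ := aux_pos_nonempty hJ hreg.pos hBpos
  refine ⟨B, hBpos, hBA'.trans (sep_subset _ _), f a₀, fun a ha => ?_⟩
  have h1 := (hc a ha).trans (hc a₀ ha₀).symm
  simpa using h1

lemma aux_mu_ind {κ lam μ : Cardinal.{0}} {J : Set (Set SOrd)}
    (hJ : IsIdeal κ lam J) (hM : MuNormal κ lam μ J) :
    ∀ n : ℕ, ∀ A, JPos κ lam J A → ∀ f : SOrd → SOrd,
      (∀ a ∈ A, f a ⊆ a ∩ Set.Iio μ.ord ∧ (f a).Finite ∧ (f a).ncard = n) →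
      ∃ B, JPos κ lam J B ∧ B ⊆ A ∧ ∃ c, ∀ a ∈ B, f a = c := by
  intro n
  induction n with
  | zero =>
    intro A hA f hf
    exact ⟨A, hA, subset_rfl, ∅, fun a ha =>
      (Set.ncard_eq_zero ((hf a ha).2.1)).mp (hf a ha).2.2⟩
  | succ n ih =>
    intro A hA f hf
    have hne : ∀ a ∈ A, (f a).Nonempty := fun a ha => by
      apply Set.nonempty_of_ncard_ne_zero
      rw [(hf a ha).2.2]; simp
    have hgmem : ∀ a ∈ A, sInf (f a) ∈ f a := fun a ha => csInf_mem (hne a ha)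
    obtain ⟨B₁, hB₁pos, hB₁A, c₀, hc₀⟩ := hM A hA (fun a => sInf (f a)) (fun a ha => by
      have h := (hf a ha).1 (hgmem a ha)
      exact ⟨h.1, h.2⟩)
    have hyp : ∀ a ∈ B₁, (fun a => f a \ {c₀}) a ⊆ a ∩ Set.Iio μ.ord ∧
        ((fun a => f a \ {c₀}) a).Finite ∧ ((fun a => f a \ {c₀}) a).ncard = n := by
      intro a ha
      have haA := hB₁A ha
      have hmem : c₀ ∈ f a := by
        rw [← hc₀ a ha]; exact hgmem a haA
      refine ⟨(diff_subset).trans (hf a haA).1, (hf a haA).2.1.diff, ?_⟩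
      rw [Set.ncard_diff_singleton_of_mem hmem, (hf a haA).2.2]
      omega
    obtain ⟨B, hBpos, hBB₁, c', hc'⟩ := ih B₁ hB₁pos (fun a => f a \ {c₀}) hyp
    refine ⟨B, hBpos, hBB₁.trans hB₁A, insert c₀ c', fun a ha => ?_⟩
    have hmem : c₀ ∈ f a := by
      rw [← hc₀ a (hBB₁ ha)]; exact hgmem a (hB₁A (hBB₁ ha))
    have h1 := hc' a ha
    rw [← h1, Set.insert_diff_singleton]
    exact (Set.insert_eq_self.mpr hmem).symm

lemma aux_mu_to_seq {κ lam μ θ : Cardinal.{0}} {J : Set (Set SOrd)}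
    (hreg : κ.IsRegular) (hunc : ℵ₀ < κ) (hθω : θ ≤ ℵ₀)
    (hJ : IsIdeal κ lam J) (hM : MuNormal κ lam μ J) : SeqNormal κ lam μ θ J := by
  intro A hA f hf
  have hfin : ∀ a ∈ A, (f a).Finite := by
    intro a ha
    have h1 : #(f a) < ℵ₀ := by
      refine lt_of_lt_of_le (hf a ha).2.1 ?_
      calc Cardinal.lift.{1} θ ≤ Cardinal.lift.{1} ℵ₀ := Cardinal.lift_le.mpr hθω
        _ = ℵ₀ := by simp
    exact Set.finite_coe_iff.mp (Cardinal.lt_aleph0_iff_finite.mp h1)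
  set An : ℕ → Set SOrd := fun n => {a ∈ A | (f a).ncard = n} with hAn
  have hcover : A ⊆ ⋃₀ (Set.range An) := fun a ha =>
    ⟨An ((f a).ncard), ⟨_, rfl⟩, ha, rfl⟩
  have hpos : ∃ n, JPos κ lam J (An n) := by
    by_contra h
    push_neg at h
    have hmemJ : ∀ n, An n ∈ J := fun n => by
      by_contra hn
      exact h n ⟨(sep_subset _ _).trans hA.1, hn⟩
    apply hA.2
    refine hJ.mono _ (hJ.unionlt (Set.range An) ?_ ?_) A hcover
    · rintro X ⟨n, rfl⟩; exact hmemJ n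
    · have h1 : #(Set.range An) ≤ ℵ₀ :=
        Cardinal.mk_le_aleph0_iff.mpr (Set.countable_range An).to_subtype
      refine lt_of_le_of_lt h1 ?_
      rw [← Cardinal.lift_aleph0.{1,0}]
      exact Cardinal.lift_lt.mpr hunc
  obtain ⟨n, hn⟩ := hpos
  obtain ⟨B, hB, hBsub, c, hc⟩ := aux_mu_ind hJ hM n (An n) hn f
    (fun a ha => ⟨(hf a ha.1).1, hfin a ha.1, ha.2⟩)
  exact ⟨B, hB, hBsub.trans (sep_subset _ _), c, hc⟩

theorem stmt17 (κ lam μ θ : Cardinal.{0}) (hreg : κ.IsRegular) (hunc : ℵ₀ < κ)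
    (hlam : κ ≤ lam) (hμ1 : 1 ≤ μ) (hmul : μ ≤ lam) (hθ2 : 2 ≤ θ) (hθω : θ ≤ ℵ₀) :
    NSseq κ lam μ θ = NSmu κ lam μ := by
  have hset : {J | IsIdeal κ lam J ∧ SeqNormal κ lam μ θ J}
      = {J | IsIdeal κ lam J ∧ MuNormal κ lam μ J} := by
    ext J
    simp only [mem_setOf_eq]
    exact ⟨fun ⟨h1, h2⟩ => ⟨h1, aux_seq_to_mu hreg hunc hlam hθ2 h1 h2⟩,
           fun ⟨h1, h2⟩ => ⟨h1, aux_mu_to_seq hreg hunc hθω h1 h2⟩⟩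
  unfold NSseq NSmu
  rw [hset]

end
end
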